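/- arXiv:1906.06223 — 10 statements merged into one kernel-verified Lean document; each statement's English description precedes it below -/
import Mathlib

section
/- Let h be an N×N real symmetric centrosymmetric matrix, t a real number, and c a complex number. If exp(−i t h)·e_1 = c·e_N, then exp(−2 i t h)·e_1 = c²·e_1. (In particular, every perfect state transfer system exhibits a perfect revival at twice the transfer time.) -/
/-!
Centrosymmetry of `h` means that `h` commutes with the reversal `i ↦ N + 1 - i` of the
coordinates, and so does the evolution `U = exp (-i t h)`. Hence `U e₁ = c e_N` implies, after
reversing, `U e_N = c e₁`, and `exp (-2 i t h) e₁ = U (U e₁) = c U e_N = c² e₁`.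
-/

open NormedSpace

namespace Matrix

variable {m n 𝔸 : Type*} [Fintype m] [DecidableEq m] [Fintype n] [DecidableEq n]

theorem exp_reindex [Ring 𝔸] [TopologicalSpace 𝔸] [IsTopologicalRing 𝔸] [Algebra ℚ 𝔸]
    [T2Space 𝔸] (e : m ≃ n) (A : Matrix m m 𝔸) :
    exp (reindex e e A) = reindex e e (exp A) := by
  have := Function.LeftInverse.map_tsum (L := .unconditional ℕ) (g := reindexAlgEquiv ℚ 𝔸 e)
    (fun k : ℕ => ((k.factorial : ℚ)⁻¹) • A ^ k) (continuous_id.matrix_reindex e e)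
    (continuous_id.matrix_reindex e.symm e.symm) (reindexAlgEquiv ℚ 𝔸 e).left_inv
  simp only [map_smul, map_pow] at this
  rw [← coe_reindexAlgEquiv ℚ, exp_eq_tsum_rat, exp_eq_tsum_rat, this]

def IsCentrosymm {k : ℕ} {α : Type*} (A : Matrix (Fin k) (Fin k) α) : Prop :=
  A.submatrix Fin.rev Fin.rev = A

namespace IsCentrosymm

variable {k : ℕ} {α β R : Type*}

theorem map {A : Matrix (Fin k) (Fin k) α} (hA : A.IsCentrosymm) (f : α → β) :
    (A.map f).IsCentrosymm := by
  unfold IsCentrosymm at *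
  exact congrArg (·.map f) hA

theorem smul [SMul R α] {A : Matrix (Fin k) (Fin k) α} (hA : A.IsCentrosymm) (r : R) :
    (r • A).IsCentrosymm := by
  unfold IsCentrosymm at *
  exact congrArg (r • ·) hA

theorem exp [Ring 𝔸] [TopologicalSpace 𝔸] [IsTopologicalRing 𝔸] [Algebra ℚ 𝔸] [T2Space 𝔸]
    {A : Matrix (Fin k) (Fin k) 𝔸} (hA : A.IsCentrosymm) : (NormedSpace.exp A).IsCentrosymm := by
  have h : NormedSpace.exp (A.submatrix Fin.rev Fin.rev) =
      (NormedSpace.exp A).submatrix Fin.rev Fin.rev :=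
    exp_reindex Fin.revPerm A
  rw [IsCentrosymm, ← h, hA]

theorem mulVec_comp_rev [NonUnitalNonAssocSemiring α] {A : Matrix (Fin k) (Fin k) α}
    (hA : A.IsCentrosymm) (v : Fin k → α) : A *ᵥ (v ∘ Fin.rev) = (A *ᵥ v) ∘ Fin.rev := by
  conv_lhs => rw [← hA]
  exact (submatrix_mulVec_equiv A (v ∘ Fin.rev) Fin.rev Fin.revPerm).trans
    (by simp [Function.comp_def])

theorem mulVec_single_rev [NonUnitalNonAssocSemiring α] [SMul R α] {A : Matrix (Fin k) (Fin k) α}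
    (hA : A.IsCentrosymm) {i j : Fin k} {x : α} {c : R}
    (h : A *ᵥ Pi.single i x = c • Pi.single j x) :
    A *ᵥ Pi.single i.rev x = c • Pi.single j.rev x := by
  have single_comp_rev (l : Fin k) : Pi.single l x ∘ Fin.rev = Pi.single l.rev x :=
    Pi.single_comp_equiv Fin.revPerm l x
  rw [← single_comp_rev, hA.mulVec_comp_rev, h, ← single_comp_rev]
  rfl

end IsCentrosymm
end Matrix

/-- Perfect state transfer at time `t` in a real symmetric centrosymmetric matrix implies
a perfect revival (with phase `c²`) at time `2t`. -/
theorem revival_of_perfect_state_transfer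
    (N : ℕ) (hN : 0 < N) (h : Matrix (Fin N) (Fin N) ℝ)
    (hcs : ∀ i j : Fin N, h i j = h i.rev j.rev)
    (t : ℝ) (c : ℂ)
    (hpst : (NormedSpace.exp
        ((-(Complex.I * (t : ℂ))) • h.map Complex.ofReal)).mulVec
        (Pi.single (⟨0, hN⟩ : Fin N) (1 : ℂ))
      = c • (Pi.single (⟨N - 1, by omega⟩ : Fin N) (1 : ℂ) : Fin N → ℂ)) :
    (NormedSpace.exp
        ((-(Complex.I * ((2 * t : ℝ) : ℂ))) • h.map Complex.ofReal)).mulVec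
        (Pi.single (⟨0, hN⟩ : Fin N) (1 : ℂ))
      = (c ^ 2) • (Pi.single (⟨0, hN⟩ : Fin N) (1 : ℂ) : Fin N → ℂ) := by
  set A := (-(Complex.I * (t : ℂ))) • h.map Complex.ofReal
  set U := exp A
  have hh : h.IsCentrosymm := funext₂ fun i j => (hcs i j).symm
  have hU : U.IsCentrosymm := ((hh.map _).smul _).exp
  have hdouble : exp ((-(Complex.I * ((2 * t : ℝ) : ℂ))) • h.map Complex.ofReal) = U * U := by
    rw [← sq, ← Matrix.exp_nsmul, ← Nat.cast_smul_eq_nsmul ℂ, smul_smul]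
    congr 2
    push_cast
    ring
  have hrev : (⟨0, hN⟩ : Fin N).rev = ⟨N - 1, by omega⟩ := by
    ext
    simp [Fin.val_rev]
  have hback : U.mulVec (Pi.single ⟨N - 1, by omega⟩ 1) = c • Pi.single ⟨0, hN⟩ 1 := by
    simpa [← hrev] using hU.mulVec_single_rev hpst
  rw [hdouble, ← Matrix.mulVec_mulVec, hpst, Matrix.mulVec_smul, hback, smul_smul, sq]
end

section
/- Let h be an N×N real symmetric tridiagonal matrix with positive off-diagonal entries, let λ_1 > λ_2 > … > λ_N be its eigenvalues, and let t_r > 0. Then there exists a complex number c with |c| = 1 such that exp(−i t_r h)·e_1 = c·e_1 (a perfect revival on the first site at time t_r) if and only if for every n with 1 ≤ n ≤ N−1, the number (λ_n − λ_{n+1})·t_r/π is a positive even integer. -/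
/-!
Diagonalise `h = U diag(λ) U*`, so that `exp(-i t h) e₁ = c e₁` iff `e^{-i t λₙ} wₙ = c wₙ`
for all `n`, where `wₙ` is the conjugate of the first coordinate of the `n`-th eigenvector.
For a Jacobi matrix no eigenvector vanishes at the first site: row `k` of the eigenvalue
equation determines coordinate `k + 1` from the earlier ones, because `h k (k+1) ≠ 0`. Hence
a revival means that all phases `e^{-i t λₙ}` coincide, i.e. that every consecutive gap
satisfies `(λₙ - λₙ₊₁) t ∈ 2πℤ`; the gaps being positive, the integers are positive.
-/

open Polynomial

namespace Matrix

theorem eq_zero_of_mulVec_eq_smul_of_apply_zero_eq_zero {R : Type*} [CommRing R]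
    [NoZeroDivisors R] {n : ℕ} {A : Matrix (Fin (n + 1)) (Fin (n + 1)) R}
    (hzero : ∀ i j : Fin (n + 1), (i : ℕ) + 1 < j → A i j = 0)
    (hsuper : ∀ i : Fin n, A i.castSucc i.succ ≠ 0)
    {v : Fin (n + 1) → R} {t : R} (hv : A *ᵥ v = t • v) (h0 : v 0 = 0) : v = 0 := by
  suffices ∀ k : Fin (n + 1), ∀ j ≤ k, v j = 0 from funext fun j ↦ this j j le_rfl
  intro k
  induction k using Fin.induction with
  | zero => intro j hj; rwa [Fin.le_zero_iff.mp hj]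
  | succ k ih =>
    intro j hj
    obtain hj | rfl := hj.lt_or_eq
    · exact ih j (Fin.le_castSucc_iff.mpr hj)
    have hrow : (A *ᵥ v) k.castSucc = A k.castSucc k.succ * v k.succ := by
      refine Finset.sum_eq_single k.succ (fun b _ hb ↦ ?_) (absurd (Finset.mem_univ _))
      rcases le_or_gt b k.castSucc with hb' | hb'
      · simp [ih b hb']
      · have : k.succ < b := lt_of_le_of_ne (Fin.castSucc_lt_iff_succ_le.mp hb') (Ne.symm hb)
        simp [hzero k.castSucc b (by simpa [Fin.lt_def] using this)]
    have : A k.castSucc k.succ * v k.succ = 0 := by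
      rw [← hrow, hv, Pi.smul_apply, ih _ le_rfl, smul_zero]
    exact (mul_eq_zero.mp this).resolve_left (hsuper k)

theorem mulVec_unitary_conj_eq_smul_iff {n R : Type*} [Fintype n] [DecidableEq n]
    [CommRing R] [StarRing R] {U : Matrix n n R} (hU : U ∈ unitaryGroup n R) (D : Matrix n n R)
    (v : n → R) (c : R) :
    (U * D * star U) *ᵥ v = c • v ↔ D *ᵥ (star U *ᵥ v) = c • (star U *ᵥ v) := by
  have hinv : Function.LeftInverse (mulVec U) (mulVec (star U)) := fun x ↦ by
    rw [mulVec_mulVec, mem_unitaryGroup_iff.mp hU, one_mulVec]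
  rw [← hinv.injective.eq_iff, mulVec_smul, mulVec_mulVec, mulVec_mulVec, ← Matrix.mul_assoc,
    ← Matrix.mul_assoc, mem_unitaryGroup_iff'.mp hU, Matrix.one_mul]

theorem diagonal_mulVec_eq_smul_iff {n R : Type*} [Fintype n] [DecidableEq n] [CommRing R]
    [NoZeroDivisors R] {d w : n → R} (hw : ∀ i, w i ≠ 0) (c : R) :
    diagonal d *ᵥ w = c • w ↔ ∀ i, d i = c := by
  simp only [funext_iff, mulVec_diagonal, Pi.smul_apply, smul_eq_mul]
  exact forall_congr' fun i ↦ mul_left_inj' (hw i)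

namespace IsHermitian

variable {n : Type*} [Fintype n] [DecidableEq n]

theorem exp_smul {A : Matrix n n ℂ} (hA : A.IsHermitian) (z : ℂ) :
    NormedSpace.exp (z • A) = (hA.eigenvectorUnitary : Matrix n n ℂ) *
      diagonal (fun i ↦ Complex.exp (z * hA.eigenvalues i)) *
      star (hA.eigenvectorUnitary : Matrix n n ℂ) := by
  set U : Matrix n n ℂ := (hA.eigenvectorUnitary : Matrix n n ℂ)
  have hUinv : U⁻¹ = star U := inv_eq_left_inv (Unitary.coe_star_mul_self _)
  have hU : IsUnit U := isUnit_iff_exists.mpr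
    ⟨star U, Unitary.coe_mul_star_self _, Unitary.coe_star_mul_self _⟩
  have hconj : z • A = U * (z • diagonal (RCLike.ofReal ∘ hA.eigenvalues)) * U⁻¹ := by
    rw [Matrix.mul_smul, Matrix.smul_mul, hUinv]
    conv_lhs => rw [hA.spectral_theorem, Unitary.conjStarAlgAut_apply]
  rw [hconj, exp_conj _ _ hU, ← diagonal_smul, exp_diagonal, hUinv]
  congr 3
  funext i
  simp [← Complex.exp_eq_exp_ℂ]

theorem exp_smul_mulVec_single_eq_smul_iff {A : Matrix n n ℂ} (hA : A.IsHermitian) {j : n}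
    (hj : ∀ i, hA.eigenvectorBasis i j ≠ 0) (z c : ℂ) :
    NormedSpace.exp (z • A) *ᵥ Pi.single j 1 = c • Pi.single j 1 ↔
      ∀ i, Complex.exp (z * hA.eigenvalues i) = c := by
  rw [hA.exp_smul, mulVec_unitary_conj_eq_smul_iff hA.eigenvectorUnitary.2,
    diagonal_mulVec_eq_smul_iff]
  intro i
  simpa [mulVec_single_one] using hj i

theorem map_eigenvalues_eq_of_charpoly_eq {𝕜 : Type*} [RCLike 𝕜] {A : Matrix n n 𝕜}
    (hA : A.IsHermitian) {lam : n → 𝕜} (hlam : A.charpoly = ∏ i, (X - C (lam i))) :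
    Finset.univ.val.map (fun i ↦ (hA.eigenvalues i : 𝕜)) = Finset.univ.val.map lam := by
  rw [← Function.comp_def, ← hA.roots_charpoly_eq_eigenvalues, hlam, roots_prod]
  · simp
  · simp [Finset.prod_ne_zero_iff, X_sub_C_ne_zero]

end IsHermitian

end Matrix

theorem Complex.exp_neg_I_mul_eq_exp_neg_I_mul_iff (t a b : ℝ) :
    Complex.exp (-(I * t) * a) = Complex.exp (-(I * t) * b) ↔
      ∃ m : ℤ, (a - b) * t / Real.pi = 2 * m := by
  rw [Complex.exp_eq_exp_iff_exists_int]
  constructor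
  · rintro ⟨m, hm⟩
    refine ⟨-m, ?_⟩
    have : (((a - b) * t : ℝ) : ℂ) = ((-(2 * m * Real.pi) : ℝ) : ℂ) := by
      push_cast
      linear_combination I * hm + ((a - b) * t + 2 * m * Real.pi) * I_sq
    rw [div_eq_iff Real.pi_ne_zero, Complex.ofReal_inj.mp this]
    push_cast
    ring
  · rintro ⟨m, hm⟩
    refine ⟨-m, ?_⟩
    rw [div_eq_iff Real.pi_ne_zero] at hm
    have : (((a - b) * t : ℝ) : ℂ) = ((2 * m * Real.pi : ℝ) : ℂ) := by rw [hm]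
    push_cast at this ⊢
    linear_combination -I * this

theorem exists_int_eq_two_mul_iff_exists_nat {x : ℝ} (hx : 0 < x) :
    (∃ m : ℤ, x = 2 * m) ↔ ∃ k : ℕ, 0 < k ∧ x = 2 * k := by
  constructor
  · rintro ⟨m, rfl⟩
    have hm : 0 < m := by exact_mod_cast pos_of_mul_pos_right hx zero_le_two
    refine ⟨m.toNat, by omega, ?_⟩
    rw [← Int.cast_natCast, Int.toNat_of_nonneg hm.le]
  · rintro ⟨k, -, rfl⟩
    exact ⟨k, by simp⟩

theorem Fin.forall_apply_eq_iff_forall_apply_eq_succ {α : Type*} {N : ℕ} (g : Fin N → α) :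
    (∀ i j, g i = g j) ↔
      ∀ i : ℕ, (hi : i + 1 < N) → g ⟨i, Nat.lt_of_succ_lt hi⟩ = g ⟨i + 1, hi⟩ := by
  refine ⟨fun h i hi ↦ h _ _, fun h ↦ ?_⟩
  have hconst : ∀ i : ℕ, (hi : i < N) → g ⟨i, hi⟩ = g ⟨0, by omega⟩ := by
    intro i
    induction i with
    | zero => intro; rfl
    | succ i ih => intro hi; rw [← h i hi, ih]
  intro i j
  rw [hconst i i.2, hconst j j.2]

/-- Perfect revival conditions for a Jacobi matrix (Lemma 2):
the first site exhibits a perfect revival at time `t_r > 0` iff all consecutive eigenvalue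
gaps satisfy `(λₙ - λₙ₊₁) t_r / π` a positive even integer. -/
theorem perfect_revival_iff
    (N : ℕ) (hN : 0 < N) (h : Matrix (Fin N) (Fin N) ℝ)
    (hsym : h.IsSymm)
    (htri : ∀ i j : Fin N, (i : ℕ) + 1 < (j : ℕ) ∨ (j : ℕ) + 1 < (i : ℕ) → h i j = 0)
    (hoffpos : ∀ i j : Fin N, (i : ℕ) + 1 = (j : ℕ) → 0 < h i j)
    (lam : Fin N → ℝ) (hdec : StrictAnti lam)
    (hspec : h.charpoly = ∏ n : Fin N, (X - C (lam n)))
    (tr : ℝ) (htr : 0 < tr) :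
    (∃ c : ℂ, ‖c‖ = 1 ∧
      (NormedSpace.exp
          ((-(Complex.I * (tr : ℂ))) • h.map Complex.ofReal)).mulVec
          (Pi.single (⟨0, hN⟩ : Fin N) (1 : ℂ))
        = c • (Pi.single (⟨0, hN⟩ : Fin N) (1 : ℂ) : Fin N → ℂ)) ↔
    (∀ i : ℕ, (hi : i + 1 < N) → ∃ k : ℕ, 0 < k ∧
      (lam ⟨i, by omega⟩ - lam ⟨i + 1, hi⟩) * tr / Real.pi = 2 * k) := by
  set A : Matrix (Fin N) (Fin N) ℂ := h.map Complex.ofReal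
  have hA : A.IsHermitian :=
    (Matrix.isHermitian_iff_isSymm.mpr hsym).map _ fun x ↦ (Complex.conj_ofReal x).symm
  have hfirst : ∀ i, hA.eigenvectorBasis i ⟨0, hN⟩ ≠ 0 := by
    intro i h0
    obtain ⟨n, rfl⟩ := Nat.exists_eq_add_one_of_ne_zero hN.ne'
    have hzero := Matrix.eq_zero_of_mulVec_eq_smul_of_apply_zero_eq_zero (A := A)
      (fun i j hij ↦ by simp [A, htri i j (.inl hij)])
      (fun i ↦ by simpa [A] using (hoffpos i.castSucc i.succ (by simp)).ne')
      (by rw [hA.mulVec_eigenvectorBasis]; exact RCLike.real_smul_eq_coe_smul (K := ℂ) _ _) h0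
    exact hA.eigenvectorBasis.orthonormal.ne_zero i (by ext k; simpa using congrFun hzero k)
  have hcharpoly : A.charpoly = ∏ i, (X - C (lam i : ℂ)) := by
    rw [show A = h.map (algebraMap ℝ ℂ) from rfl, h.charpoly_map, hspec]
    simp [Polynomial.map_prod]
  set z : ℂ := -(Complex.I * tr)
  have heig : ∀ c, (∀ i, Complex.exp (z * hA.eigenvalues i) = c) ↔
      ∀ i, Complex.exp (z * lam i) = c := fun c ↦ by
    simpa using congrArg (fun s ↦ ∀ x ∈ s, Complex.exp (z * x) = c)
      (hA.map_eigenvalues_eq_of_charpoly_eq hcharpoly)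
  have hconst : (∃ c : ℂ, ‖c‖ = 1 ∧ ∀ i, Complex.exp (z * lam i) = c) ↔
      ∀ i j, Complex.exp (z * lam i) = Complex.exp (z * lam j) :=
    ⟨fun ⟨c, _, hc⟩ i j ↦ (hc i).trans (hc j).symm,
      fun H ↦ ⟨_, by simp [z, Complex.norm_exp], fun i ↦ H i ⟨0, hN⟩⟩⟩
  simp_rw [hA.exp_smul_mulVec_single_eq_smul_iff hfirst, heig]
  rw [hconst, Fin.forall_apply_eq_iff_forall_apply_eq_succ (fun i ↦ Complex.exp (z * lam i))]
  refine forall₂_congr fun i hi ↦ ?_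
  have hgap : 0 < (lam ⟨i, by omega⟩ - lam ⟨i + 1, hi⟩) * tr / Real.pi :=
    div_pos (mul_pos (sub_pos.mpr (hdec (Nat.lt_succ_self i))) htr) Real.pi_pos
  rw [Complex.exp_neg_I_mul_eq_exp_neg_I_mul_iff, exists_int_eq_two_mul_iff_exists_nat hgap]
end

section
/- Let h be an N×N real symmetric tridiagonal centrosymmetric matrix with positive off-diagonal entries and eigenvalues λ_1 > λ_2 > … > λ_N, and for each n let v^{(n)} be a unit-norm real eigenvector of h for λ_n. Then there exists a constant R > 0 such that for every n, (v^{(n)}_1)² = (−1)^{n+1}·R / ∏_{m ≠ n} (λ_n − λ_m), where v^{(n)}_1 is the first component of v^{(n)}. -/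
/-!
Let `N = M + 1`. Because `h` is tridiagonal, `(h ^ k) 0 M` vanishes for `k < M`, while
`B = (h ^ M) 0 M = ∏ h i (i+1) > 0`. The spectral decomposition writes these entries as the
moments `∑ₙ vₙ(0) vₙ(M) λₙ ^ k`; pairing them with the coefficients of the nodal polynomial
`∏_{m ≠ n} (X - λₘ)`, which kills every `λₘ` with `m ≠ n`, gives
`vₙ(0) vₙ(M) ∏_{m ≠ n} (λₙ - λₘ) = B`.
Centrosymmetry makes `vₙ ∘ rev` another `λₙ`-eigenvector, and an eigenvector of a Jacobi matrix
is determined by its first entry, so `|vₙ(M)| = |vₙ(0)|`. Finally `∏_{m ≠ n} (λₙ - λₘ)` has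
exactly `n` negative factors.
-/

open Polynomial

namespace Matrix

variable {R : Type*} {n : ℕ}

theorem pow_apply_eq_zero_of_add_lt [Semiring R] {h : Matrix (Fin n) (Fin n) R}
    (hupper : ∀ i j : Fin n, (i : ℕ) + 1 < j → h i j = 0) :
    ∀ (k : ℕ) (i j : Fin n), (i : ℕ) + k < j → (h ^ k) i j = 0
  | 0, i, j, hij => by simp [one_apply_ne (Fin.ne_of_lt (by simpa using hij))]
  | k + 1, i, j, hij => by
    rw [pow_succ, mul_apply]
    refine Finset.sum_eq_zero fun l _ => ?_
    rcases lt_or_ge ((i : ℕ) + k) l with hl | hl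
    · rw [pow_apply_eq_zero_of_add_lt hupper k i l hl, zero_mul]
    · rw [hupper l j (by omega), mul_zero]

theorem pow_apply_pos_of_add_eq [Semiring R] [PartialOrder R] [IsStrictOrderedRing R]
    {h : Matrix (Fin n) (Fin n) R}
    (hupper : ∀ i j : Fin n, (i : ℕ) + 1 < j → h i j = 0)
    (hsuper : ∀ i j : Fin n, (i : ℕ) + 1 = j → 0 < h i j) :
    ∀ (k : ℕ) (i j : Fin n), (i : ℕ) + k = j → 0 < (h ^ k) i j
  | 0, i, j, hij => by simp [show i = j from Fin.ext (by simpa using hij)]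
  | k + 1, i, j, hij => by
    let l : Fin n := ⟨i + k, by omega⟩
    rw [pow_succ, mul_apply, Finset.sum_eq_single l]
    · exact mul_pos (pow_apply_pos_of_add_eq hupper hsuper k i l rfl)
        (hsuper l j (by simp [l]; omega))
    · intro l' _ hl'
      rcases lt_or_gt_of_ne (Fin.val_ne_of_ne hl') with hlt | hgt
      · rw [hupper l' j (by simp [l] at hlt; omega), mul_zero]
      · rw [pow_apply_eq_zero_of_add_lt hupper k i l' hgt, zero_mul]
    · simp

theorem eq_zero_of_mulVec_eq_smul_of_apply_zero [CommRing R] [NoZeroDivisors R]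
    {h : Matrix (Fin (n + 1)) (Fin (n + 1)) R}
    (hupper : ∀ i j : Fin (n + 1), (i : ℕ) + 1 < j → h i j = 0)
    (hsuper : ∀ i j : Fin (n + 1), (i : ℕ) + 1 = j → h i j ≠ 0)
    {μ : R} {u : Fin (n + 1) → R} (hu : h *ᵥ u = μ • u) (h0 : u 0 = 0) : u = 0 := by
  suffices ∀ i : Fin (n + 1), ∀ j ≤ i, u j = 0 from funext fun i => this i i le_rfl
  refine Fin.induction (fun j hj => by rwa [nonpos_iff_eq_zero.mp hj]) fun i ih => ?_
  have hrow : h i.castSucc i.succ * u i.succ = 0 := by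
    have := congrFun hu i.castSucc
    rw [Pi.smul_apply, ih _ le_rfl, smul_zero, mulVec, dotProduct,
      Finset.sum_eq_single i.succ] at this
    · exact this
    · intro j _ hj
      rcases lt_or_gt_of_ne hj with hlt | hgt
      · rw [ih j (Fin.le_castSucc_iff.mpr hlt), mul_zero]
      · rw [hupper _ _ (by simpa [Fin.lt_def] using hgt), zero_mul]
    · simp
  have hsucc := (mul_eq_zero.mp hrow).resolve_left (hsuper _ _ (by simp))
  intro j hj
  rcases hj.lt_or_eq with hlt | rfl
  · exact ih j (Fin.le_castSucc_iff.mpr hlt)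
  · exact hsucc

theorem mulVec_comp_rev [NonUnitalNonAssocSemiring R] {h : Matrix (Fin n) (Fin n) R}
    (hcs : ∀ i j : Fin n, h i j = h i.rev j.rev) (u : Fin n → R) :
    h *ᵥ (u ∘ Fin.rev) = (h *ᵥ u) ∘ Fin.rev := by
  funext i
  simp only [mulVec, dotProduct, Function.comp_apply, hcs i]
  exact Fintype.sum_equiv Fin.revPerm _ _ fun _ => rfl

theorem apply_last_sq_eq_apply_zero_sq [CommRing R] [NoZeroDivisors R]
    {h : Matrix (Fin (n + 1)) (Fin (n + 1)) R}
    (hupper : ∀ i j : Fin (n + 1), (i : ℕ) + 1 < j → h i j = 0)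
    (hsuper : ∀ i j : Fin (n + 1), (i : ℕ) + 1 = j → h i j ≠ 0)
    (hcs : ∀ i j : Fin (n + 1), h i j = h i.rev j.rev)
    {μ : R} {u : Fin (n + 1) → R} (hu : h *ᵥ u = μ • u) : u (Fin.last n) ^ 2 = u 0 ^ 2 := by
  set x := u (Fin.last n) • u - u 0 • (u ∘ Fin.rev)
  have hx : h *ᵥ x = μ • x := by
    simp only [x, mulVec_sub, mulVec_smul, mulVec_comp_rev hcs, hu, smul_sub, smul_comm μ]
    rfl
  have hx0 : x 0 = 0 := by simp [x, mul_comm]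
  have := congrFun (eq_zero_of_mulVec_eq_smul_of_apply_zero hupper hsuper hx hx0) (Fin.last n)
  simp only [x, Pi.sub_apply, Pi.smul_apply, Function.comp_apply, Fin.rev_last, smul_eq_mul,
    Pi.zero_apply] at this
  linear_combination this

theorem IsSymm.dotProduct_eq_zero_of_mulVec_eq_smul {ι : Type*} [Fintype ι] [CommRing R]
    [NoZeroDivisors R] {h : Matrix ι ι R} (hsym : h.IsSymm) {a b : R} {u w : ι → R}
    (hu : h *ᵥ u = a • u) (hw : h *ᵥ w = b • w) (hab : a ≠ b) : u ⬝ᵥ w = 0 := by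
  have : a * (u ⬝ᵥ w) = b * (u ⬝ᵥ w) := by
    calc a * (u ⬝ᵥ w) = w ⬝ᵥ h *ᵥ u := by
          rw [hu, dotProduct_smul, dotProduct_comm, smul_eq_mul]
      _ = (hᵀ *ᵥ w) ⬝ᵥ u := by rw [dotProduct_mulVec, mulVec_transpose]
      _ = b * (u ⬝ᵥ w) := by rw [hsym.eq, hw, smul_dotProduct, dotProduct_comm, smul_eq_mul]
  exact (mul_eq_zero.mp (sub_mul a b _ ▸ sub_eq_zero.mpr this)).resolve_left (sub_ne_zero.mpr hab)

theorem IsSymm.pow_apply_eq_sum_eigenvectors {ι : Type*} [Fintype ι] [DecidableEq ι]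
    [CommRing R] [NoZeroDivisors R] {h : Matrix ι ι R} (hsym : h.IsSymm) {lam : ι → R}
    (hlam : Function.Injective lam) {v : ι → ι → R} (hunit : ∀ m, v m ⬝ᵥ v m = 1)
    (heig : ∀ m, h *ᵥ v m = lam m • v m) (k : ℕ) (i j : ι) :
    (h ^ k) i j = ∑ m, v m i * v m j * lam m ^ k := by
  set V : Matrix ι ι R := of v
  have hortho : V * Vᵀ = 1 := by
    ext a b
    rw [mul_apply', one_apply]
    split_ifs with hab
    · subst hab; exact hunit a
    · exact hsym.dotProduct_eq_zero_of_mulVec_eq_smul (heig a) (heig b) (hlam.ne hab)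
  have hsemi : SemiconjBy Vᵀ (diagonal lam) h := by
    ext a b
    have := congrFun (heig b) a
    simp only [mulVec, dotProduct, Pi.smul_apply, smul_eq_mul] at this
    rw [mul_diagonal, mul_apply]
    simpa [V, mul_comm] using this.symm
  calc (h ^ k) i j = (h ^ k * Vᵀ * V) i j := by
        rw [Matrix.mul_assoc, mul_eq_one_comm.mp hortho, Matrix.mul_one]
    _ = (Vᵀ * diagonal (lam ^ k) * V) i j := by rw [← (hsemi.pow_right k).eq, diagonal_pow]
    _ = ∑ m, v m i * v m j * lam m ^ k := by
        simp only [mul_apply, transpose_apply, of_apply, V, diagonal_apply, Pi.pow_apply,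
          mul_ite, mul_zero, Finset.sum_ite_eq', Finset.mem_univ, if_true]
        exact Finset.sum_congr rfl fun m _ => by ring

end Matrix

section Moments

variable {ι R : Type*} [Fintype ι] [CommRing R] {M : ℕ} {lam c : ι → R} {B : R}

theorem sum_mul_eval_eq_coeff_mul_of_moments
    (hmom : ∀ k ≤ M, ∑ m, c m * lam m ^ k = if k = M then B else 0)
    {p : R[X]} (hp : p.natDegree ≤ M) :
    ∑ m, c m * p.eval (lam m) = p.coeff M * B := by
  calc ∑ m, c m * p.eval (lam m)
      = ∑ k ∈ Finset.range (M + 1), p.coeff k * ∑ m, c m * lam m ^ k := by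
        simp only [eval_eq_sum_range' (Nat.lt_succ_of_le hp), Finset.mul_sum]
        rw [Finset.sum_comm]
        exact Finset.sum_congr rfl fun k _ => Finset.sum_congr rfl fun m _ => by ring
    _ = p.coeff M * B := by
        rw [Finset.sum_congr rfl fun k hk => by rw [hmom k (Finset.mem_range_succ_iff.mp hk)]]
        simp

theorem mul_prod_erase_sub_eq_of_moments [Nontrivial R] [DecidableEq ι]
    (hcard : Fintype.card ι = M + 1)
    (hmom : ∀ k ≤ M, ∑ m, c m * lam m ^ k = if k = M then B else 0) (j : ι) :
    c j * ∏ m ∈ Finset.univ.erase j, (lam j - lam m) = B := by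
  have hdeg : (Lagrange.nodal (Finset.univ.erase j) lam).natDegree = M := by
    rw [Lagrange.natDegree_nodal, Finset.card_erase_of_mem (Finset.mem_univ j),
      Finset.card_univ, hcard, Nat.add_sub_cancel]
  have := sum_mul_eval_eq_coeff_mul_of_moments hmom hdeg.le
  rw [Finset.sum_eq_single j, Lagrange.eval_nodal, ← hdeg,
    Lagrange.nodal_monic.coeff_natDegree, one_mul] at this
  · exact this
  · intro m _ hm
    rw [Lagrange.eval_nodal, Finset.prod_eq_zero (Finset.mem_erase.mpr ⟨hm, Finset.mem_univ m⟩)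
      (sub_self _), mul_zero]
  · simp

end Moments

theorem neg_one_pow_mul_prod_erase_sub_pos {R : Type*} [CommRing R] [LinearOrder R]
    [IsStrictOrderedRing R] {n : ℕ} {lam : Fin n → R} (hlam : StrictAnti lam) (j : Fin n) :
    0 < (-1) ^ (j : ℕ) * ∏ m ∈ Finset.univ.erase j, (lam j - lam m) := by
  have hsign :
      ∏ m ∈ Finset.univ.erase j, (if m < j then (-1 : R) else 1) = (-1) ^ (j : ℕ) := by
    rw [Finset.prod_ite, Finset.prod_const_one, mul_one, Finset.prod_const]
    congr 1
    rw [Finset.filter_erase, Finset.erase_eq_of_notMem (by simp), Finset.filter_gt_eq_Iio,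
      Fin.card_Iio]
  rw [← hsign, ← Finset.prod_mul_distrib]
  refine Finset.prod_pos fun m hm => ?_
  split_ifs with hmj
  · linarith [hlam hmj]
  · linarith [hlam (lt_of_le_of_ne (not_lt.mp hmj) (Finset.ne_of_mem_erase hm).symm)]

-- `n` is 0-indexed, so the paper's sign `(-1)^(n+1)` becomes `(-1) ^ n`.
theorem centrosymmetric_jacobi_first_component_general
    (N : ℕ) (hN : 0 < N) (h : Matrix (Fin N) (Fin N) ℝ)
    (hsym : h.IsSymm)
    (htri : ∀ i j : Fin N, (i : ℕ) + 1 < (j : ℕ) ∨ (j : ℕ) + 1 < (i : ℕ) → h i j = 0)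
    (hoffpos : ∀ i j : Fin N, (i : ℕ) + 1 = (j : ℕ) → 0 < h i j)
    (hcs : ∀ i j : Fin N, h i j = h i.rev j.rev)
    (lam : Fin N → ℝ) (hdec : StrictAnti lam)
    (v : Fin N → Fin N → ℝ)
    (hunit : ∀ n, ∑ i, (v n i) ^ 2 = 1)
    (heig : ∀ n, h.mulVec (v n) = lam n • v n) :
    ∃ R : ℝ, 0 < R ∧ ∀ n : Fin N,
      (v n (⟨0, hN⟩ : Fin N)) ^ 2
        = (-1) ^ (n : ℕ) * R / ∏ m ∈ Finset.univ.erase n, (lam n - lam m) := by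
  obtain ⟨M, rfl⟩ : ∃ M, N = M + 1 := ⟨N - 1, by omega⟩
  have hupper : ∀ i j : Fin (M + 1), (i : ℕ) + 1 < j → h i j = 0 :=
    fun i j hij => htri i j (Or.inl hij)
  have hsuper : ∀ i j : Fin (M + 1), (i : ℕ) + 1 = j → h i j ≠ 0 :=
    fun i j hij => (hoffpos i j hij).ne'
  set B := (h ^ M) 0 (Fin.last M)
  have hB : 0 < B := Matrix.pow_apply_pos_of_add_eq hupper hoffpos M 0 _ (by simp)
  have hmom :
      ∀ k ≤ M, ∑ m, v m 0 * v m (Fin.last M) * lam m ^ k = if k = M then B else 0 := by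
    intro k hk
    rw [← hsym.pow_apply_eq_sum_eigenvectors hdec.injective
      (by simpa [dotProduct, sq] using hunit) heig]
    rcases hk.lt_or_eq with hlt | rfl
    · rw [if_neg hlt.ne, Matrix.pow_apply_eq_zero_of_add_lt hupper k 0 _ (by simpa)]
    · rw [if_pos rfl]
  refine ⟨B, hB, fun n => ?_⟩
  change v n 0 ^ 2 = _
  set D := ∏ m ∈ Finset.univ.erase n, (lam n - lam m)
  have hkey : v n 0 * v n (Fin.last M) * D = B :=
    mul_prod_erase_sub_eq_of_moments (by simp) hmom n
  have hlast : |v n (Fin.last M)| = |v n 0| := (sq_eq_sq_iff_abs_eq_abs _ _).mp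
    (Matrix.apply_last_sq_eq_apply_zero_sq hupper hsuper hcs (heig n))
  have habs : v n 0 ^ 2 * |D| = B := by
    rw [← sq_abs, ← abs_of_pos hB, ← hkey, abs_mul, abs_mul, hlast, sq]
  have hsign := neg_one_pow_mul_prod_erase_sub_pos hdec n
  have hD : |D| = (-1) ^ (n : ℕ) * D := by
    rw [← abs_of_pos hsign, abs_mul, abs_neg_one_pow, one_mul]
  have hs : ((-1 : ℝ) ^ (n : ℕ)) ^ 2 = 1 := by
    rw [← pow_mul, mul_comm, pow_mul, neg_one_sq, one_pow]
  rw [← habs, hD, eq_div_iff (right_ne_zero_of_mul hsign.ne')]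
  linear_combination (-(v n 0 ^ 2 * D)) * hs

/-- For a centrosymmetric Jacobi matrix, the squared first components of the unit eigenvectors
are `(-1)^(n+1) R / ∏_{m ≠ n} (λ_n - λ_m)` for some constant `R > 0`
(here `n` is 1-indexed, so with 0-indexed `n` the sign is `(-1)^n`). -/
theorem centrosymmetric_jacobi_first_component
    (N : ℕ) (hN : 0 < N) (h : Matrix (Fin N) (Fin N) ℝ)
    (hsym : h.IsSymm)
    (htri : ∀ i j : Fin N, (i : ℕ) + 1 < (j : ℕ) ∨ (j : ℕ) + 1 < (i : ℕ) → h i j = 0)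
    (hoffpos : ∀ i j : Fin N, (i : ℕ) + 1 = (j : ℕ) → 0 < h i j)
    (hcs : ∀ i j : Fin N, h i j = h i.rev j.rev)
    (lam : Fin N → ℝ) (hdec : StrictAnti lam)
    (hspec : h.charpoly = ∏ n : Fin N, (X - C (lam n)))
    (v : Fin N → Fin N → ℝ)
    (hunit : ∀ n, ∑ i, (v n i) ^ 2 = 1)
    (heig : ∀ n, h.mulVec (v n) = lam n • v n) :
    ∃ R : ℝ, 0 < R ∧ ∀ n : Fin N,
      (v n (⟨0, hN⟩ : Fin N)) ^ 2
        = (-1) ^ (n : ℕ) * R / ∏ m ∈ Finset.univ.erase n, (lam n - lam m) :=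
  centrosymmetric_jacobi_first_component_general N hN h hsym htri hoffpos hcs lam hdec v hunit heig
end

section
/- For every N ≥ 3 and every λ > 0, there do not exist positive couplings J_1, …, J_{N−1} > 0 such that the single-excitation Hamiltonian h of the field-free Heisenberg chain of length N has characteristic polynomial ∏_{k=0}^{N−1} (X + k·λ), i.e., such that h has the linear spectrum {0, −λ, −2λ, …, −(N−1)λ}. -/
/-!
If `A` is real symmetric with simple spectrum `{μ_k}`, then for the Lagrange basis polynomial `L_j`
of the nodes `μ_k` the matrix `L_j(A)` is the orthogonal projector onto the `μ_j`-eigenline: it is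
symmetric, idempotent and of trace one, so its off-diagonal entries are at most `1/2` in absolute
value. Up to the nodal weight `w_j`, `L_j` is monic of degree `N - 1`, and a monic polynomial of
degree `N - 1` in the tridiagonal `h` has corner entry `(0, N - 1)` equal to `J_1 ⋯ J_{N-1}`.
So the corner entry of `L_j(h)` is `w_j J_1 ⋯ J_{N-1}`.

For `μ_k = -kλ`, the `0`-eigenline is spanned by the all-ones vector (`h` has zero row sums), so
the corner entry of `L_0(h)` is `1/N`. The nodal weights of an arithmetic progression satisfy
`w_1 = -(N - 1) w_0`, so the corner entry of `L_1(h)` is `-(N - 1)/N`, of absolute value greater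
than `1/2` once `N ≥ 3`.
-/

open Polynomial

/-- The single-excitation Hamiltonian of the field-free Heisenberg chain of length `N`
with couplings `J 1, …, J (N-1)` (and the convention `J 0 = J N = 0`). -/
def heisHam (N : ℕ) (J : ℕ → ℝ) : Matrix (Fin N) (Fin N) ℝ :=
  Matrix.of fun i j =>
    if (i : ℕ) + 1 = (j : ℕ) then J ((i : ℕ) + 1)
    else if (j : ℕ) + 1 = (i : ℕ) then J ((j : ℕ) + 1)
    else if i = j then -(J (i : ℕ) + J ((i : ℕ) + 1))
    else 0

open Matrix Lagrange Finset

namespace Lagrange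

variable {F ι : Type*} [Field F] [DecidableEq ι]

lemma basis_eq_C_nodalWeight_mul_nodal_erase {s : Finset ι} {v : ι → F} {i : ι}
    (hi : i ∈ s) :
    Lagrange.basis s v i = C (nodalWeight s v i) * nodal (s.erase i) v := by
  rw [basis_eq_prod_sub_inv_mul_nodal_div hi, nodal_erase_eq_nodal_div hi]

lemma nodalWeight_range_succ (v : ℕ → F) {N i : ℕ} (hi : i < N) :
    nodalWeight (range (N + 1)) v i = (v i - v N)⁻¹ * nodalWeight (range N) v i := by
  rw [nodalWeight, range_add_one, erase_insert_of_ne (by omega), prod_insert (by simp),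
    nodalWeight]

lemma nodalWeight_range_one_eq (d : ℝ) {N : ℕ} (hN : 2 ≤ N) :
    nodalWeight (range N) (fun k => k * d) 1 =
      -(N - 1) * nodalWeight (range N) (fun k => k * d) 0 := by
  induction N, hN using Nat.le_induction with
  | base => simp [nodalWeight, range_add_one, erase_insert_of_ne]; norm_num
  | succ N hN ih =>
    rw [nodalWeight_range_succ _ (by omega), nodalWeight_range_succ _ (by omega), ih]
    have hN1 : (1 : ℝ) - N ≠ 0 := by
      have : (2 : ℝ) ≤ N := by exact_mod_cast hN
      linarith
    have hN0 : (N : ℝ) ≠ 0 := by positivity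
    push_cast
    field_simp
    ring

end Lagrange

namespace Matrix

namespace IsHermitian

variable {n : Type*} [Fintype n] {P : Matrix n n ℝ}

lemma posSemidef_of_mul_self_eq (hP : P.IsHermitian) (hPP : P * P = P) : P.PosSemidef := by
  have h := posSemidef_conjTranspose_mul_self P
  rwa [hP.eq, hPP] at h

lemma eq_zero_of_mul_self_eq_of_trace_eq_zero (hP : P.IsHermitian) (hPP : P * P = P)
    (htr : P.trace = 0) : P = 0 :=
  (hP.posSemidef_of_mul_self_eq hPP).trace_eq_zero_iff.mp htr

lemma sq_apply_le_of_mul_self_eq_of_trace_eq_one (hP : P.IsHermitian) (hPP : P * P = P)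
    (htr : P.trace = 1) {a b : n} (hab : a ≠ b) : P a b ^ 2 ≤ 1 / 4 := by
  classical
  have hpsd := hP.posSemidef_of_mul_self_eq hPP
  have ha : 0 ≤ P a a := hpsd.diag_nonneg
  have hb : 0 ≤ P b b := hpsd.diag_nonneg
  have hminor : P a b * P b a ≤ P a a * P b b := by
    have h := (hpsd.submatrix ![a, b]).det_nonneg
    rw [det_fin_two] at h
    simpa using h
  have hsymm : P b a = P a b := by simpa using hP.apply a b
  have hdiag : P a a + P b b ≤ 1 := by
    rw [← htr, trace, ← sum_pair hab (f := fun i => P i i)]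
    exact sum_le_sum_of_subset_of_nonneg (subset_univ _) fun i _ _ => hpsd.diag_nonneg
  rw [hsymm] at hminor
  nlinarith [sq_nonneg (P a a - P b b), mul_self_le_mul_self (add_nonneg ha hb) hdiag]

lemma eq_smul_vecMulVec_of_mul_self_eq_of_trace_eq_one (hP : P.IsHermitian) (hPP : P * P = P)
    (htr : P.trace = 1) {v : n → ℝ} (hv : v ≠ 0) (hPv : P *ᵥ v = v) :
    P = (v ⬝ᵥ v)⁻¹ • vecMulVec v v := by
  have hvv : v ⬝ᵥ v ≠ 0 := dotProduct_self_eq_zero.not.mpr hv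
  have hvP : v ᵥ* P = v := by
    rw [← mulVec_transpose, ← conjTranspose_eq_transpose_of_trivial, hP.eq, hPv]
  have hPV : P * vecMulVec v v = vecMulVec v v := by rw [mul_vecMulVec, hPv]
  have hVP : vecMulVec v v * P = vecMulVec v v := by rw [vecMulVec_mul, hvP]
  have hVV : vecMulVec v v * vecMulVec v v = (v ⬝ᵥ v) • vecMulVec v v := by
    rw [vecMulVec_mul_vecMulVec, vecMulVec_smul]
  set Q := P - (v ⬝ᵥ v)⁻¹ • vecMulVec v v
  have hQ : Q.IsHermitian := hP.sub (by simp [IsHermitian])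
  have hQQ : Q * Q = Q := by
    simp only [Q, sub_mul, mul_sub, Matrix.smul_mul, Matrix.mul_smul, hPP, hPV, hVP, hVV,
      smul_smul, inv_mul_cancel₀ hvv, mul_one]
    abel
  have hQtr : Q.trace = 0 := by simp [Q, trace_vecMulVec, htr, hvv]
  exact sub_eq_zero.mp (hQ.eq_zero_of_mul_self_eq_of_trace_eq_zero hQQ hQtr)

end IsHermitian

variable {n : Type*} [Fintype n] [DecidableEq n]

section Eigenvector

variable {R : Type*} [CommRing R] {A : Matrix n n R} {c : R}

lemma aeval_mul_of_mul_eq_smul {B : Matrix n n R} (h : A * B = c • B) (p : R[X]) :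
    aeval A p * B = p.eval c • B := by
  have := Module.End.aeval_apply_of_mem_apply_eq_smul (f := Algebra.lmul R _ A) (p := p) h
  rwa [aeval_algHom_apply] at this

lemma aeval_mulVec_of_mulVec_eq_smul {v : n → R} (h : A *ᵥ v = c • v) (p : R[X]) :
    aeval A p *ᵥ v = p.eval c • v := by
  have := Module.End.aeval_apply_of_mem_apply_eq_smul (f := toLinAlgEquiv' A) (p := p)
    (by simpa [toLinAlgEquiv'_apply] using h)
  rwa [aeval_algHom_apply, toLinAlgEquiv'_apply] at this

end Eigenvector

namespace IsHermitian

variable {A : Matrix n n ℝ}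

protected lemma aeval (hA : A.IsHermitian) (p : ℝ[X]) : (Polynomial.aeval A p).IsHermitian := by
  rw [← cfc_polynomial p A hA.isSelfAdjoint]
  exact cfc_predicate _ A

lemma trace_aeval (hA : A.IsHermitian) (p : ℝ[X]) :
    (Polynomial.aeval A p).trace = ∑ i, p.eval (hA.eigenvalues i) := by
  rw [← cfc_polynomial p A hA.isSelfAdjoint, hA.cfc_eq, IsHermitian.cfc,
    Unitary.conjStarAlgAut_apply, trace_mul_cycle, Unitary.coe_star_mul_self, one_mul,
    trace_diagonal]
  rfl

lemma trace_aeval_of_charpoly_eq_nodal {ι : Type*} {s : Finset ι} {μ : ι → ℝ}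
    (hA : A.IsHermitian) (hchar : A.charpoly = nodal s μ) (p : ℝ[X]) :
    (Polynomial.aeval A p).trace = ∑ k ∈ s, p.eval (μ k) := by
  have hroots : univ.val.map hA.eigenvalues = s.val.map μ := by
    have h := hA.roots_charpoly_eq_eigenvalues
    rw [hchar, nodal, prod_eq_multiset_prod,
      show s.val.map (fun k => X - C (μ k)) = (s.val.map μ).map (fun a => X - C a) by
        rw [Multiset.map_map]; rfl,
      roots_multiset_prod_X_sub_C] at h
    simpa using h.symm
  have h := congrArg (fun m => (m.map p.eval).sum) hroots
  simp only [Multiset.map_map] at h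
  rw [hA.trace_aeval]
  exact h

end IsHermitian

section LagrangeBasis

variable {F ι : Type*} [Field F] [DecidableEq ι] {s : Finset ι} {j : ι}

lemma mul_aeval_lagrangeBasis {A : Matrix n n F} {μ : ι → F} (hchar : A.charpoly = nodal s μ)
    (hj : j ∈ s) :
    A * aeval A (Lagrange.basis s μ j) = μ j • aeval A (Lagrange.basis s μ j) := by
  have h : aeval A ((X - C (μ j)) * Lagrange.basis s μ j) = 0 := by
    rw [basis_eq_C_nodalWeight_mul_nodal_erase hj, mul_left_comm, ← nodal_eq_mul_nodal_erase hj,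
      ← hchar, map_mul, aeval_self_charpoly, mul_zero]
  rwa [map_mul, map_sub, aeval_X, aeval_C, Algebra.algebraMap_eq_smul_one, sub_mul, smul_mul,
    one_mul, sub_eq_zero] at h

lemma aeval_lagrangeBasis_mul_self {A : Matrix n n F} {μ : ι → F}
    (hchar : A.charpoly = nodal s μ) (hinj : Set.InjOn μ s) (hj : j ∈ s) :
    aeval A (Lagrange.basis s μ j) * aeval A (Lagrange.basis s μ j) =
      aeval A (Lagrange.basis s μ j) := by
  rw [aeval_mul_of_mul_eq_smul (mul_aeval_lagrangeBasis hchar hj), eval_basis_self hinj hj,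
    one_smul]

namespace IsHermitian

variable {A : Matrix n n ℝ} {μ : ι → ℝ}

lemma trace_aeval_lagrangeBasis (hA : A.IsHermitian) (hchar : A.charpoly = nodal s μ)
    (hinj : Set.InjOn μ s) (hj : j ∈ s) : (aeval A (Lagrange.basis s μ j)).trace = 1 := by
  rw [hA.trace_aeval_of_charpoly_eq_nodal hchar,
    sum_eq_single j (fun k hk hkj => eval_basis_of_ne hkj.symm hk) (absurd hj),
    eval_basis_self hinj hj]

lemma sq_aeval_lagrangeBasis_apply_le (hA : A.IsHermitian) (hchar : A.charpoly = nodal s μ)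
    (hinj : Set.InjOn μ s) (hj : j ∈ s) {a b : n} (hab : a ≠ b) :
    aeval A (Lagrange.basis s μ j) a b ^ 2 ≤ 1 / 4 :=
  (hA.aeval _).sq_apply_le_of_mul_self_eq_of_trace_eq_one
    (aeval_lagrangeBasis_mul_self hchar hinj hj) (hA.trace_aeval_lagrangeBasis hchar hinj hj) hab

lemma aeval_lagrangeBasis_eq_smul_vecMulVec (hA : A.IsHermitian)
    (hchar : A.charpoly = nodal s μ) (hinj : Set.InjOn μ s) (hj : j ∈ s) {v : n → ℝ}
    (hv : v ≠ 0) (hAv : A *ᵥ v = μ j • v) :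
    aeval A (Lagrange.basis s μ j) = (v ⬝ᵥ v)⁻¹ • vecMulVec v v := by
  refine (hA.aeval _).eq_smul_vecMulVec_of_mul_self_eq_of_trace_eq_one
    (aeval_lagrangeBasis_mul_self hchar hinj hj) (hA.trace_aeval_lagrangeBasis hchar hinj hj) hv ?_
  rw [aeval_mulVec_of_mulVec_eq_smul hAv, eval_basis_self hinj hj, one_smul]

end IsHermitian

end LagrangeBasis

section Superdiagonal

variable {R : Type*} [CommRing R] {N : ℕ} {M : Matrix (Fin N) (Fin N) R} {c : ℕ → R}

lemma pow_apply_eq_zero_of_add_lt_s8 (hM : ∀ i j : Fin N, (i : ℕ) + 1 < j → M i j = 0) (t : ℕ)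
    {i j : Fin N} (hij : (i : ℕ) + t < j) : (M ^ t) i j = 0 := by
  induction t generalizing j with
  | zero => exact one_apply_ne (Fin.ne_of_lt hij)
  | succ t ih =>
    rw [pow_succ, mul_apply]
    refine sum_eq_zero fun x _ => ?_
    by_cases hx : (i : ℕ) + t < x
    · rw [ih hx, zero_mul]
    · rw [hM x j (by omega), mul_zero]

lemma pow_apply_eq_prod_Ioc (hM : ∀ i j : Fin N, (i : ℕ) + 1 < j → M i j = 0)
    (hsup : ∀ i j : Fin N, (i : ℕ) + 1 = j → M i j = c j) (t : ℕ) {i j : Fin N}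
    (hij : (j : ℕ) = i + t) : (M ^ t) i j = ∏ k ∈ Ioc (i : ℕ) j, c k := by
  induction t generalizing j with
  | zero =>
    obtain rfl : i = j := Fin.ext hij.symm
    simp
  | succ t ih =>
    set x : Fin N := ⟨i + t, by omega⟩
    rw [pow_succ, mul_apply, sum_eq_single x, ih rfl, hsup x j (by simp [x]; omega),
      hij, ← add_assoc, prod_Ioc_succ_top (by omega)]
    · intro y _ hyx
      by_cases hy : (i : ℕ) + t < y
      · rw [pow_apply_eq_zero_of_add_lt_s8 hM t hy, zero_mul]
      · rw [hM y j (by simp [x, Fin.ext_iff] at hyx; omega), mul_zero]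
    · simp

lemma aeval_apply_eq_prod_Ioc_of_monic (hM : ∀ i j : Fin N, (i : ℕ) + 1 < j → M i j = 0)
    (hsup : ∀ i j : Fin N, (i : ℕ) + 1 = j → M i j = c j) {p : R[X]} (hp : p.Monic)
    {i j : Fin N} (hij : (j : ℕ) = i + p.natDegree) :
    aeval M p i j = ∏ k ∈ Ioc (i : ℕ) j, c k := by
  rw [aeval_eq_sum_range, sum_apply, sum_eq_single p.natDegree, smul_apply, hp.coeff_natDegree,
    one_smul, pow_apply_eq_prod_Ioc hM hsup _ hij]
  · intro t ht hne
    rw [smul_apply, pow_apply_eq_zero_of_add_lt_s8 hM t (by have := mem_range.mp ht; omega), smul_zero]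
  · simp

end Superdiagonal

end Matrix

section HeisenbergChain

variable {N : ℕ} {J : ℕ → ℝ}

lemma heisHam_apply_eq_zero_of_lt {i j : Fin N} (hij : (i : ℕ) + 1 < j) :
    heisHam N J i j = 0 := by
  rw [heisHam, of_apply, if_neg (by omega), if_neg (by omega),
    if_neg (by simp [Fin.ext_iff]; omega)]

lemma heisHam_apply_of_add_one_eq {i j : Fin N} (hij : (i : ℕ) + 1 = j) :
    heisHam N J i j = J j := by
  simp [heisHam, hij]

lemma aeval_heisHam_lagrangeBasis_apply {ι : Type*} [DecidableEq ι] {s : Finset ι}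
    {μ : ι → ℝ} {j : ι} (hj : j ∈ s) {a b : Fin N} (hab : (b : ℕ) = a + (#s - 1)) :
    aeval (heisHam N J) (Lagrange.basis s μ j) a b =
      nodalWeight s μ j * ∏ k ∈ Ioc (a : ℕ) b, J k := by
  rw [basis_eq_C_nodalWeight_mul_nodal_erase hj, map_mul, aeval_C, ← Algebra.smul_def,
    Matrix.smul_apply, smul_eq_mul,
    aeval_apply_eq_prod_Ioc_of_monic (fun _ _ => heisHam_apply_eq_zero_of_lt)
      (fun _ _ => heisHam_apply_of_add_one_eq) nodal_monic
      (by rwa [natDegree_nodal, card_erase_of_mem hj])]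

lemma isHermitian_heisHam : (heisHam N J).IsHermitian := by
  ext i j
  simp only [conjTranspose_apply, star_trivial, heisHam, of_apply]
  split_ifs <;> first | rfl | omega | (subst_vars; rfl)

lemma heisHam_mulVec_one (hJ0 : J 0 = 0) (hJN : J N = 0) : heisHam N J *ᵥ 1 = 0 := by
  ext i
  have hsplit : ∀ j : Fin N, heisHam N J i j =
      ((if (j : ℕ) = i + 1 then J (i + 1) else 0) + if (j : ℕ) + 1 = i then J i else 0) -
        if (j : ℕ) = i then J i + J (i + 1) else 0 := by
    intro j
    simp only [heisHam, of_apply, Fin.ext_iff]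
    split_ifs <;> grind
  have hprev : (∑ j : Fin N, if (j : ℕ) + 1 = i then J i else 0) = J i := by
    rcases i with ⟨_ | m, hm⟩
    · simp [hJ0]
    · simp only [Nat.add_right_cancel_iff]
      rw [Fin.sum_univ_eq_sum_range (fun k => if k = m then J (m + 1) else 0), sum_ite_eq',
        if_pos (mem_range.mpr (by omega))]
  have hnext : (∑ j : Fin N, if (j : ℕ) = i + 1 then J (i + 1) else 0) = J (i + 1) := by
    rw [Fin.sum_univ_eq_sum_range (fun k => if k = i + 1 then J (i + 1) else 0), sum_ite_eq']
    split_ifs with h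
    · rfl
    · rw [show (i : ℕ) + 1 = N by simp at h; omega, hJN]
  simp only [mulVec, dotProduct, Pi.one_apply, mul_one, hsplit, sum_add_distrib,
    sum_sub_distrib, hprev, hnext]
  simp [Fin.sum_univ_eq_sum_range (fun k => if k = (i : ℕ) then J i + J (i + 1) else 0)]
  ring

end HeisenbergChain

/-- Lemma 5 of the paper: no field-free Heisenberg chain of length `N ≥ 3` has the linear
spectrum `{0, -λ, -2λ, …, -(N-1)λ}`. -/
theorem no_linear_spectrum (N : ℕ) (hN : 3 ≤ N) (lam : ℝ) (hlam : 0 < lam) :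
    ¬ ∃ J : ℕ → ℝ, (∀ n, 1 ≤ n → n ≤ N - 1 → 0 < J n) ∧ J 0 = 0 ∧ J N = 0 ∧
      (heisHam N J).charpoly = ∏ k ∈ Finset.range N, (X + C ((k : ℝ) * lam)) := by
  rintro ⟨J, -, hJ0, hJN, hchar⟩
  set μ : ℕ → ℝ := fun k => k * -lam
  have hnodal : (heisHam N J).charpoly = nodal (range N) μ := by
    rw [hchar, nodal]
    exact prod_congr rfl fun k _ => by simp [μ, sub_eq_add_neg]
  have hinj : Set.InjOn μ (range N) := fun a _ b _ h => by simpa [μ, hlam.ne'] using h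
  have hA : (heisHam N J).IsHermitian := isHermitian_heisHam
  have h0 : 0 ∈ range N := mem_range.mpr (by omega)
  have h1 : 1 ∈ range N := mem_range.mpr (by omega)
  set a : Fin N := ⟨0, by omega⟩
  set b : Fin N := ⟨N - 1, by omega⟩
  have hcorner : ∀ j ∈ range N, aeval (heisHam N J) (Lagrange.basis (range N) μ j) a b =
      nodalWeight (range N) μ j * ∏ k ∈ Ioc 0 (N - 1), J k :=
    fun j hj => aeval_heisHam_lagrangeBasis_apply hj (by simp [a, b])
  have hP0 : aeval (heisHam N J) (Lagrange.basis (range N) μ 0) a b = (N : ℝ)⁻¹ := by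
    rw [hA.aeval_lagrangeBasis_eq_smul_vecMulVec hnodal hinj h0 (v := 1)
      (fun h => by simpa using congrFun h a) (by simp [μ, heisHam_mulVec_one hJ0 hJN])]
    simp
  have hP1 := hA.sq_aeval_lagrangeBasis_apply_le hnodal hinj h1 (a := a) (b := b)
    (by simp [a, b, Fin.ext_iff]; omega)
  rw [hcorner 1 h1, nodalWeight_range_one_eq _ (by omega), mul_assoc, ← hcorner 0 h0, hP0] at hP1
  have hN' : (3 : ℝ) ≤ N := by exact_mod_cast hN
  field_simp at hP1
  nlinarith
end

section
/- Let N ≥ 2 and let L be the Laplacian of the weighted path graph on N vertices with positive edge weights J_1, …, J_{N−1}, i.e., the N×N real symmetric tridiagonal matrix with L_{n,n+1} = L_{n+1,n} = −J_n and L_{n,n} = J_{n−1} + J_n (setting J_0 = J_N = 0). Then the coefficient of X^1 in the characteristic polynomial det(X·I − L) equals (−1)^{N−1}·N·J_1·J_2·⋯·J_{N−1}; equivalently, the product of the N−1 nonzero eigenvalues of L equals N·∏_{i=1}^{N−1} J_i. -/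
open Polynomial

/-- The Laplacian of the weighted path graph on `N` vertices with edge weights
`J 1, …, J (N-1)` (and the convention `J 0 = J N = 0`):
`L n (n+1) = L (n+1) n = -J (n+1)` (0-indexed) and `L n n = J n + J (n+1)`. -/
def pathLaplacian (N : ℕ) (J : ℕ → ℝ) : Matrix (Fin N) (Fin N) ℝ :=
  Matrix.of fun i j =>
    if (i : ℕ) + 1 = (j : ℕ) then -J ((i : ℕ) + 1)
    else if (j : ℕ) + 1 = (i : ℕ) then -J ((j : ℕ) + 1)
    else if i = j then J (i : ℕ) + J ((i : ℕ) + 1)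
    else 0

namespace PathAux

/-- Upper triangular all-ones matrix (column prefix-summer). -/
def Pm (N : ℕ) : Matrix (Fin N) (Fin N) ℝ := Matrix.of fun i j => if (i:ℕ) ≤ (j:ℕ) then 1 else 0

/-- Lower triangular all-ones matrix (row prefix-summer). -/
def Qm (N : ℕ) : Matrix (Fin N) (Fin N) ℝ := Matrix.of fun i j => if (j:ℕ) ≤ (i:ℕ) then 1 else 0

/-- Column prefix sums of the path Laplacian. -/
def Fm (N : ℕ) (J : ℕ → ℝ) : Matrix (Fin N) (Fin N) ℝ :=
  Matrix.of fun i j =>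
    J ((j:ℕ)+1) * ((if (i:ℕ) = (j:ℕ) then 1 else 0) - (if (i:ℕ) = (j:ℕ)+1 then 1 else 0))

lemma det_Pm (N : ℕ) : (Pm N).det = 1 := by
  rw [Matrix.det_of_upperTriangular (M := Pm N)]
  · simp [Pm]
  · intro i j hij
    have h1 : (j:ℕ) < (i:ℕ) := hij
    simp only [Pm, Matrix.of_apply]
    rw [if_neg (by omega)]

lemma det_Qm (N : ℕ) : (Qm N).det = 1 := by
  rw [Matrix.det_of_lowerTriangular (Qm N)]
  · simp [Qm]
  · intro i j hij
    have h1 : (i:ℕ) < (j:ℕ) := hij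
    simp only [Qm, Matrix.of_apply]
    rw [if_neg (by omega)]

private lemma sum_fin_indicator (N : ℕ) (i : Fin N) (g : ℕ → ℝ) :
    (∑ k : Fin N, (if (k:ℕ) ≤ (i:ℕ) then (1:ℝ) else 0) * g k)
      = ∑ m ∈ Finset.range ((i:ℕ)+1), g m := by
  rw [Fin.sum_univ_eq_sum_range (fun m => (if m ≤ (i:ℕ) then (1:ℝ) else 0) * g m) N]
  rw [← Finset.sum_subset (Finset.range_subset_range.2 i.isLt)]
  · refine Finset.sum_congr rfl fun m hm => ?_
    rw [if_pos (Nat.lt_succ_iff.1 (Finset.mem_range.1 hm)), one_mul]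
  · intro m hm hm'
    rw [if_neg, zero_mul]
    intro h
    exact hm' (Finset.mem_range.2 (by omega))

/-- Key identity: `L * Pm = Fm`. -/
lemma L_mul_Pm (N : ℕ) (J : ℕ → ℝ) (hJ0 : J 0 = 0) :
    pathLaplacian N J * Pm N = Fm N J := by
  ext i j
  rw [Matrix.mul_apply]
  have hentry : ∀ k : Fin N, pathLaplacian N J i k * Pm N k j
      = (if (k:ℕ) ≤ (j:ℕ) then (1:ℝ) else 0) *
        (if (i:ℕ) + 1 = (k:ℕ) then -J ((i:ℕ)+1)
         else if (k:ℕ) + 1 = (i:ℕ) then -J ((k:ℕ)+1)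
         else if (i:ℕ) = (k:ℕ) then J (i:ℕ) + J ((i:ℕ)+1) else 0) := by
    intro k
    rw [mul_comm]
    simp only [pathLaplacian, Pm, Matrix.of_apply, Fin.ext_iff]
  rw [Finset.sum_congr rfl fun k _ => hentry k]
  rw [sum_fin_indicator N j (fun m =>
      (if (i:ℕ) + 1 = m then -J ((i:ℕ)+1)
       else if m + 1 = (i:ℕ) then -J (m+1)
       else if (i:ℕ) = m then J (i:ℕ) + J ((i:ℕ)+1) else 0))]
  have key : ∀ m : ℕ,
      (if (i:ℕ) + 1 = m then -J ((i:ℕ)+1)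
       else if m + 1 = (i:ℕ) then -J (m+1)
       else if (i:ℕ) = m then J (i:ℕ) + J ((i:ℕ)+1) else 0)
      = (J m * ((if m = (i:ℕ) then 1 else 0) - (if m = (i:ℕ)+1 then 1 else 0)))
        - (J (m+1) * ((if m+1 = (i:ℕ) then 1 else 0) - (if m+1 = (i:ℕ)+1 then 1 else 0))) := by
    intro m
    split_ifs <;> first | omega | (subst_vars; first | ring | omega) | ring
  rw [Finset.sum_congr rfl fun m _ => key m]
  rw [Finset.sum_range_sub' (fun m =>
      J m * ((if m = (i:ℕ) then 1 else 0) - (if m = (i:ℕ)+1 then 1 else 0))) ((j:ℕ)+1)]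
  simp only [hJ0, zero_mul, zero_sub, Fm, Matrix.of_apply]
  have h1 : ((j:ℕ)+1 = (i:ℕ)) ↔ ((i:ℕ) = (j:ℕ)+1) := by omega
  have h2 : ((j:ℕ)+1 = (i:ℕ)+1) ↔ ((i:ℕ) = (j:ℕ)) := by omega
  simp only [h1, h2]
  ring

end PathAux

/-- The coefficient of `X` in the characteristic polynomial of a weighted path Laplacian is
`(-1)^(N-1) N J_1 J_2 ⋯ J_{N-1}`; equivalently the product of the `N-1` nonzero eigenvalues
is `N ∏ J_i`. -/
theorem pathLaplacian_charpoly_coeff_one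
    (N : ℕ) (hN : 2 ≤ N) (J : ℕ → ℝ)
    (hJpos : ∀ n, 1 ≤ n → n ≤ N - 1 → 0 < J n) (hJ0 : J 0 = 0) (hJN : J N = 0) :
    (pathLaplacian N J).charpoly.coeff 1
      = (-1) ^ (N - 1) * N * ∏ i ∈ Finset.range (N - 1), J (i + 1) := by
  obtain ⟨M, rfl⟩ : ∃ M, N = M + 1 := ⟨N - 1, by omega⟩
  have hM1 : (1:ℕ) ≤ M := by omega
  set L := pathLaplacian (M+1) J with hL
  set P' : Matrix (Fin (M+1)) (Fin (M+1)) ℝ[X] :=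
    (C : ℝ →+* ℝ[X]).mapMatrix (PathAux.Pm (M+1)) with hP'
  have hdetP' : P'.det = 1 := by
    rw [hP', ← RingHom.map_det, PathAux.det_Pm, map_one]
  have hscalar : (Matrix.scalar (Fin (M+1)) (X : ℝ[X])) * P' = (X : ℝ[X]) • P' := by
    ext i j
    rw [Matrix.scalar_apply, Matrix.diagonal_mul, Matrix.smul_apply, smul_eq_mul]
  have hG : Matrix.charmatrix L * P'
      = (X : ℝ[X]) • P' - (C : ℝ →+* ℝ[X]).mapMatrix (PathAux.Fm (M+1) J) := by
    rw [Matrix.charmatrix, sub_mul, hscalar, ← PathAux.L_mul_Pm (M+1) J hJ0, _root_.map_mul]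
  have hdet1 : L.charpoly
      = ((X : ℝ[X]) • P' - (C : ℝ →+* ℝ[X]).mapMatrix (PathAux.Fm (M+1) J)).det := by
    rw [Matrix.charpoly, ← hG, Matrix.det_mul, hdetP', mul_one]
  set G' : Matrix (Fin (M+1)) (Fin (M+1)) ℝ[X] := Matrix.of fun i j =>
    if (j:ℕ) = M then 1
    else ((X : ℝ[X]) • P' - (C : ℝ →+* ℝ[X]).mapMatrix (PathAux.Fm (M+1) J)) i j with hG'
  set D : Matrix (Fin (M+1)) (Fin (M+1)) ℝ[X] :=
    Matrix.diagonal (fun j : Fin (M+1) => if (j:ℕ) = M then (X:ℝ[X]) else 1) with hD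
  have hfac : (X : ℝ[X]) • P' - (C : ℝ →+* ℝ[X]).mapMatrix (PathAux.Fm (M+1) J)
      = G' * D := by
    ext i j
    rw [Matrix.mul_diagonal]
    by_cases hj : (j:ℕ) = M
    · rw [hG']
      simp only [Matrix.of_apply, if_pos hj, one_mul]
      have hij : (i:ℕ) ≤ (j:ℕ) := by have := i.isLt; omega
      have hF : PathAux.Fm (M+1) J i j = 0 := by
        simp only [PathAux.Fm, Matrix.of_apply, hj, hJN]
        ring
      have hPij : P' i j = 1 := by
        rw [hP', RingHom.mapMatrix_apply, Matrix.map_apply]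
        simp only [PathAux.Pm, Matrix.of_apply, if_pos hij, map_one]
      rw [Matrix.sub_apply, Matrix.smul_apply, hPij, smul_eq_mul, mul_one,
        RingHom.mapMatrix_apply, Matrix.map_apply, hF, map_zero, sub_zero]
    · rw [hG']
      simp only [Matrix.of_apply, if_neg hj, mul_one]
  have hdetD : D.det = X := by
    rw [hD, Matrix.det_diagonal, Fin.prod_univ_castSucc]
    rw [Finset.prod_eq_one (fun x _ =>
      if_neg (by have := x.isLt; simp only [Fin.coe_castSucc]; omega)), one_mul,
      if_pos (Fin.val_last M)]
  have hcoeff : L.charpoly.coeff 1 = (G'.det).coeff 0 := by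
    rw [hdet1, hfac, Matrix.det_mul, hdetD, Polynomial.coeff_mul_X]
  rw [hcoeff, Polynomial.coeff_zero_eq_eval_zero]
  have heval : Polynomial.eval 0 G'.det = (G'.map (Polynomial.evalRingHom 0)).det :=
    RingHom.map_det (Polynomial.evalRingHom 0) G'
  set M0 : Matrix (Fin (M+1)) (Fin (M+1)) ℝ := Matrix.of fun i j =>
    if (j:ℕ) = M then 1 else -(PathAux.Fm (M+1) J i j) with hM0
  have hmap : G'.map (Polynomial.evalRingHom 0) = M0 := by
    ext i j
    by_cases hj : (j:ℕ) = M
    · simp [hG', hM0, Matrix.map_apply, hj]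
    · simp only [hG', hM0, Matrix.map_apply, Matrix.of_apply, if_neg hj, hP',
        Matrix.sub_apply, Matrix.smul_apply, RingHom.mapMatrix_apply, smul_eq_mul,
        coe_evalRingHom, eval_sub, eval_mul, eval_X, zero_mul, eval_C, zero_sub, PathAux.Pm]
  set T : Matrix (Fin (M+1)) (Fin (M+1)) ℝ := Matrix.of fun i j =>
    if (j:ℕ) = M then ((i:ℕ)+1 : ℝ)
    else if (i:ℕ) = (j:ℕ) then -J ((j:ℕ)+1) else 0 with hT
  have hQM0 : PathAux.Qm (M+1) * M0 = T := by
    ext i j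
    rw [Matrix.mul_apply]
    have hentry : ∀ k : Fin (M+1), PathAux.Qm (M+1) i k * M0 k j
        = (if (k:ℕ) ≤ (i:ℕ) then (1:ℝ) else 0) *
          (if (j:ℕ) = M then 1
           else -(J ((j:ℕ)+1) * ((if (k:ℕ) = (j:ℕ) then 1 else 0)
              - (if (k:ℕ) = (j:ℕ)+1 then 1 else 0)))) := by
      intro k
      simp only [PathAux.Qm, PathAux.Fm, hM0, Matrix.of_apply]
    rw [Finset.sum_congr rfl fun k _ => hentry k]
    rw [PathAux.sum_fin_indicator (M+1) i (fun m =>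
        (if (j:ℕ) = M then 1
         else -(J ((j:ℕ)+1) * ((if m = (j:ℕ) then 1 else 0)
            - (if m = (j:ℕ)+1 then 1 else 0)))))]
    by_cases hj : (j:ℕ) = M
    · simp only [if_pos hj, Finset.sum_const, Finset.card_range, nsmul_eq_mul, mul_one,
        hT, Matrix.of_apply]
      push_cast
      ring
    · simp only [if_neg hj]
      have key : ∀ m : ℕ,
          -(J ((j:ℕ)+1) * ((if m = (j:ℕ) then 1 else 0) - (if m = (j:ℕ)+1 then (1:ℝ) else 0)))
          = (J ((j:ℕ)+1) * (if m = (j:ℕ)+1 then 1 else 0))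
            - (J ((j:ℕ)+1) * (if m+1 = (j:ℕ)+1 then 1 else 0)) := by
        intro m
        split_ifs <;> first | omega | ring
      rw [Finset.sum_congr rfl fun m _ => key m]
      rw [Finset.sum_range_sub' (fun m => J ((j:ℕ)+1) * (if m = (j:ℕ)+1 then (1:ℝ) else 0))
        ((i:ℕ)+1)]
      have h0 : (0:ℕ) ≠ (j:ℕ)+1 := by omega
      have h3 : ((i:ℕ)+1 = (j:ℕ)+1) ↔ ((i:ℕ) = (j:ℕ)) := by omega
      simp only [if_neg h0, mul_zero, zero_sub, h3, hT, Matrix.of_apply, if_neg hj]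
      by_cases hij : (i:ℕ) = (j:ℕ)
      · simp [hij]
      · simp [hij]
  have hdetM0 : M0.det = T.det := by
    calc M0.det = (PathAux.Qm (M+1)).det * M0.det := by rw [PathAux.det_Qm, one_mul]
      _ = (PathAux.Qm (M+1) * M0).det := (Matrix.det_mul _ _).symm
      _ = T.det := by rw [hQM0]
  have hTtri : T.BlockTriangular id := by
    intro i j hij
    have h1 : (j:ℕ) < (i:ℕ) := hij
    have h2 := i.isLt
    rw [hT]
    simp only [Matrix.of_apply]
    rw [if_neg (by omega), if_neg (by omega)]
  have hdetT : T.det = (-1)^M * ((M:ℝ)+1) * ∏ i ∈ Finset.range M, J (i+1) := by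
    rw [Matrix.det_of_upperTriangular hTtri, Fin.prod_univ_castSucc]
    have hlast : T (Fin.last M) (Fin.last M) = (M:ℝ)+1 := by
      rw [hT]; simp only [Matrix.of_apply, Fin.val_last, if_pos rfl]; push_cast; ring
    have hdiag : ∀ i : Fin M, T (Fin.castSucc i) (Fin.castSucc i) = -J ((i:ℕ)+1) := by
      intro i
      have := i.isLt
      rw [hT]
      simp only [Matrix.of_apply, Fin.coe_castSucc]
      rw [if_neg (by omega)]
      simp
    rw [hlast, Finset.prod_congr rfl fun i _ => hdiag i]
    rw [Fin.prod_univ_eq_prod_range (fun m => -J (m+1)) M]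
    have hneg : ∏ m ∈ Finset.range M, -J (m+1)
        = ((-1:ℝ)^M) * ∏ m ∈ Finset.range M, J (m+1) := by
      calc ∏ m ∈ Finset.range M, -J (m+1)
          = ∏ m ∈ Finset.range M, ((-1) * J (m+1)) :=
            Finset.prod_congr rfl fun m _ => (neg_one_mul _).symm
        _ = ((-1:ℝ)^M) * ∏ m ∈ Finset.range M, J (m+1) := by
            rw [Finset.prod_mul_distrib, Finset.prod_const, Finset.card_range]
    rw [hneg]
    ring
  rw [heval, hmap, hdetM0, hdetT]
  simp only [Nat.add_sub_cancel]
  push_cast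
  ring
end

section
/- For every natural number N ≥ 3, there do not exist positive reals J_1, …, J_{N−1} such that Σ_{i=1}^{N−1} J_i = N(N−1)/4 and ∏_{i=1}^{N−1} J_i = (N−1)!/N. -/
private lemma key_pow (n : ℕ) (hn : 1 ≤ n) :
    ((n : ℝ) + 1) ^ (n + 1) ≤ 4 * (n : ℝ) ^ (n + 1) := by
  by_cases h2 : n ≤ 2
  · interval_cases n <;> norm_num
  · push_neg at h2
    have hn3 : 3 ≤ n := h2
    have hnp : (0 : ℝ) < n := by exact_mod_cast Nat.pos_of_ne_zero (by omega)
    have hsplit : ((n : ℝ) + 1) = (n : ℝ) * (1 + 1 / n) := by field_simp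
    rw [hsplit, mul_pow]
    have h4 : (1 + 1 / (n : ℝ)) ^ (n + 1) ≤ 4 := by
      have hb : (1 + 1 / (n : ℝ)) ≤ Real.exp (1 / n) := by
        have := Real.add_one_le_exp (1 / (n : ℝ)); linarith
      have hlog : (((n : ℕ) + 1 : ℕ) : ℝ) * (1 / n) ≤ Real.log 4 := by
        have hlog2 : (0.6931471803 : ℝ) < Real.log 2 := Real.log_two_gt_d9
        have h4eq : Real.log 4 = 2 * Real.log 2 := by
          rw [show (4 : ℝ) = 2 ^ 2 by norm_num, Real.log_pow]; push_cast; ring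
        have hfrac : ((n : ℕ) + 1 : ℕ) * (1 / (n : ℝ)) = 1 + 1 / n := by
          push_cast; field_simp
        have h13 : 1 / (n : ℝ) ≤ 1 / 3 := by
          apply one_div_le_one_div_of_le (by norm_num)
          exact_mod_cast hn3
        rw [hfrac, h4eq]; linarith
      calc (1 + 1 / (n : ℝ)) ^ (n + 1)
          ≤ (Real.exp (1 / n)) ^ (n + 1) :=
            pow_le_pow_left₀ (by positivity) hb _
        _ = Real.exp ((((n : ℕ) + 1 : ℕ) : ℝ) * (1 / n)) := by
            rw [Real.exp_nat_mul]
        _ ≤ Real.exp (Real.log 4) := Real.exp_le_exp.2 hlog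
        _ = 4 := Real.exp_log (by norm_num)
    nlinarith [pow_pos hnp (n + 1)]

private lemma fact_bound (N : ℕ) (hN : 3 ≤ N) :
    (N : ℝ) ^ N < 4 ^ (N - 1) * (Nat.factorial (N - 1) : ℝ) := by
  induction N, hN using Nat.le_induction with
  | base => norm_num [Nat.factorial]
  | succ N hN IH =>
    have hN1 : 1 ≤ N := by omega
    have hkey := key_pow N hN1
    have hNp : (0 : ℝ) < N := by exact_mod_cast Nat.pos_of_ne_zero (by omega)
    have hfac : (Nat.factorial N : ℝ) = N * Nat.factorial (N - 1) := by
      rw [← Nat.mul_factorial_pred (by omega)]; push_cast; ring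
    have hstep : 4 * (N : ℝ) * ((N : ℝ) ^ N) < 4 * (N : ℝ) * (4 ^ (N - 1) * Nat.factorial (N - 1)) :=
      mul_lt_mul_of_pos_left IH (by positivity)
    have h4 : (4 : ℝ) ^ (N + 1 - 1) = 4 * 4 ^ (N - 1) := by
      rw [show N + 1 - 1 = (N - 1) + 1 by omega, pow_succ]; ring
    calc ((N + 1 : ℕ) : ℝ) ^ (N + 1) = ((N : ℝ) + 1) ^ (N + 1) := by push_cast; ring
      _ ≤ 4 * (N : ℝ) ^ (N + 1) := hkey
      _ = 4 * (N : ℝ) * (N : ℝ) ^ N := by ring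
      _ < 4 * (N : ℝ) * (4 ^ (N - 1) * Nat.factorial (N - 1)) := hstep
      _ = 4 ^ (N + 1 - 1) * (Nat.factorial (N + 1 - 1) : ℝ) := by
          rw [h4]; simp only [Nat.add_sub_cancel, hfac]; ring

/-- The trace and determinant constraints on the couplings of a putative linear-spectrum
field-free Heisenberg chain are jointly unsatisfiable: there are no positive reals
`J_1, …, J_{N-1}` with `Σ J_i = N(N-1)/4` and `∏ J_i = (N-1)!/N`. -/
theorem no_couplings_with_trace_and_det (N : ℕ) (hN : 3 ≤ N) :
    ¬ ∃ J : ℕ → ℝ, (∀ i, 1 ≤ i → i ≤ N - 1 → 0 < J i) ∧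
      (∑ i ∈ Finset.range (N - 1), J (i + 1) = (N : ℝ) * (N - 1) / 4) ∧
      (∏ i ∈ Finset.range (N - 1), J (i + 1) = (Nat.factorial (N - 1) : ℝ) / N) := by
  rintro ⟨J, hpos, hsum, hprod⟩
  set n := N - 1 with hn
  have hn2 : 2 ≤ n := by omega
  have hnR : (n : ℝ) = (N : ℝ) - 1 := by
    have : (n : ℕ) + 1 = N := by omega
    have := congrArg (Nat.cast : ℕ → ℝ) this
    push_cast at this; linarith
  have hnpos : (0 : ℝ) < n := by exact_mod_cast Nat.pos_of_ne_zero (by omega)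
  have hNpos : (0 : ℝ) < N := by exact_mod_cast Nat.pos_of_ne_zero (by omega)
  have hz : ∀ i ∈ Finset.range n, (0 : ℝ) ≤ J (i + 1) := by
    intro i hi
    exact le_of_lt (hpos (i + 1) (by omega) (by simp at hi; omega))
  -- AM-GM
  have hAM := Real.geom_mean_le_arith_mean (Finset.range n) (fun _ => 1)
      (fun i => J (i + 1)) (fun _ _ => zero_le_one)
      (by simp [hnpos]) hz
  simp only [Real.rpow_one, one_mul, Finset.sum_const, Finset.card_range,
    nsmul_eq_mul, mul_one] at hAM
  have hsum' : (∑ i ∈ Finset.range n, J (i + 1)) / (n : ℝ) = (N : ℝ) / 4 := by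
    have hne : ((N : ℝ) - 1) ≠ 0 := by
      have : (3 : ℝ) ≤ N := by exact_mod_cast hN
      linarith
    rw [hsum, hnR]
    field_simp
  rw [hsum'] at hAM
  set P := ∏ i ∈ Finset.range n, J (i + 1) with hP
  have hPpos : 0 < P := Finset.prod_pos (fun i hi => hpos (i + 1) (by omega) (by simp at hi; omega))
  -- raise both sides to the n-th power
  have hPle : P ≤ ((N : ℝ) / 4) ^ n := by
    have h1 : (P ^ ((n : ℝ)⁻¹)) ^ n ≤ ((N : ℝ) / 4) ^ n :=
      pow_le_pow_left₀ (Real.rpow_nonneg hPpos.le _) hAM n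
    have h2 : (P ^ ((n : ℝ)⁻¹)) ^ n = P := by
      rw [← Real.rpow_natCast (P ^ ((n : ℝ)⁻¹)) n, ← Real.rpow_mul hPpos.le,
        inv_mul_cancel₀ (ne_of_gt hnpos), Real.rpow_one]
    rwa [h2] at h1
  -- contradiction with the factorial bound
  have hfb := fact_bound N hN
  rw [← hn] at hfb
  have hprod' : (Nat.factorial n : ℝ) / N ≤ ((N : ℝ) / 4) ^ n := by
    rw [← hprod]; exact hPle
  have h4pos : (0 : ℝ) < 4 ^ n := by positivity
  have hNn : (N : ℝ) ^ n * (N : ℝ) = (N : ℝ) ^ N := by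
    rw [← pow_succ]; congr 1; omega
  rw [div_pow, div_le_div_iff₀ hNpos h4pos] at hprod'
  nlinarith [hprod', hfb, hNn]
end

section
/- Let N ≥ 1 and take couplings J_n = n·(N−n) for 1 ≤ n ≤ N−1. Then the single-excitation Hamiltonian h of the field-free Heisenberg chain of length N with these couplings has characteristic polynomial ∏_{n=1}^{N} (X + n(n−1)); i.e., its eigenvalues are −n(n−1) for n = 1, …, N. -/
open Polynomial

noncomputable section HahnAux

/-- Falling factorial `x(x-1)⋯(x-k+1)` as a real function. -/
def ffct : ℕ → ℝ → ℝ
  | 0, _ => 1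
  | k+1, x => ffct k x * (x - k)

lemma ffct_zero (x : ℝ) : ffct 0 x = 1 := rfl

lemma ffct_succ (k : ℕ) (x : ℝ) : ffct (k+1) x = ffct k x * (x - k) := rfl

lemma ffct_shift (k : ℕ) (x : ℝ) : ffct (k+1) x = x * ffct k (x - 1) := by
  induction k generalizing x with
  | zero => simp [ffct]
  | succ k ih =>
    rw [ffct_succ, ih, ffct_succ (x := x - 1)]
    push_cast
    ring

lemma ffct_diff (k : ℕ) (x : ℝ) : ffct (k+1) (x+1) - ffct (k+1) x = (k+1) * ffct k x := by
  induction k generalizing x with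
  | zero => simp [ffct]
  | succ k ih =>
    have h := ih x
    have hB : ffct (k+1) x = ffct k x * (x - k) := ffct_succ k x
    rw [ffct_succ (k+1) (x+1), ffct_succ (k+1) x]
    push_cast at h hB ⊢
    linear_combination (x - (k:ℝ)) * h - ((k:ℝ)+1) * hB

lemma ffct_nat_lt {k i : ℕ} (h : i < k) : ffct k (i:ℝ) = 0 := by
  induction k with
  | zero => omega
  | succ k ih =>
    rw [ffct_succ]
    rcases Nat.lt_succ_iff_lt_or_eq.mp h with h' | h'
    · rw [ih h', zero_mul]
    · subst h'; simp

lemma ffct_self (k : ℕ) : ffct k (k:ℝ) = (k.factorial : ℝ) := by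
  induction k with
  | zero => simp [ffct]
  | succ k ih =>
    rw [ffct_shift]
    push_cast
    rw [show ((k:ℝ) + 1 - 1) = (k:ℝ) by ring, ih, Nat.factorial_succ]
    push_cast
    ring

/-- The key three-term identity for the Hahn chain operator acting on falling factorials. -/
lemma ffct_key (N k : ℕ) (x : ℝ) :
    x * ((N:ℝ) - x) * ffct k (x - 1) + (x+1) * ((N:ℝ) - (x+1)) * ffct k (x+1)
      - (x * ((N:ℝ) - x) + (x+1) * ((N:ℝ) - (x+1))) * ffct k x
    = -((k:ℝ) * ((k:ℝ)+1)) * ffct k x + (k:ℝ)^2 * ((N:ℝ) - (k:ℝ)) * ffct (k-1) x := by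
  cases k with
  | zero => simp [ffct]
  | succ m =>
    have h1 : ffct (m+1) x - ffct (m+1) (x-1) = (m+1) * ffct m (x-1) := by
      have := ffct_diff m (x-1)
      rwa [show (x - 1 + 1) = x by ring] at this
    have h2 : ffct (m+1) (x+1) - ffct (m+1) x = (m+1) * ffct m x := ffct_diff m x
    have h3 : ffct (m+1) x = x * ffct m (x-1) := ffct_shift m x
    have h5 : ffct (m+1) x = ffct m x * (x - m) := ffct_succ m x
    have hk : ((m+1:ℕ):ℝ) = (m:ℝ)+1 := by push_cast; ring
    rw [show (m+1-1 : ℕ) = m from rfl]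
    push_cast
    linear_combination (-(x * ((N:ℝ) - x))) * h1 + ((x+1) * ((N:ℝ) - x - 1)) * h2
      + (((m:ℝ)+1) * ((N:ℝ) - x)) * h3 + (((m:ℝ)+1) * ((m:ℝ) + 2 - (N:ℝ) + x)) * h5

/-- Sum over `Fin N` of a function supported at one point given by a `ℕ`-equation. -/
lemma fin_sum_ite_nat (N a : ℕ) (f : ℕ → ℝ) :
    (∑ j : Fin N, if a = (j:ℕ) then f (j:ℕ) else 0) = if a < N then f a else 0 := by
  rw [Fin.sum_univ_eq_sum_range (fun n => if a = n then f n else 0) N,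
    Finset.sum_ite_eq (Finset.range N) a f]
  simp [Finset.mem_range]

lemma fin_sum_ite_pred (N a : ℕ) (f : ℕ → ℝ) :
    (∑ j : Fin N, if (j:ℕ)+1 = a then f (j:ℕ) else 0)
      = if 1 ≤ a ∧ a ≤ N then f (a-1) else 0 := by
  cases a with
  | zero => simp
  | succ m =>
    have h1 : (∑ j : Fin N, if (j:ℕ)+1 = m+1 then f (j:ℕ) else 0)
        = ∑ j : Fin N, if m = (j:ℕ) then f (j:ℕ) else 0 := by
      refine Finset.sum_congr rfl fun j _ => ?_
      refine if_congr ?_ rfl rfl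
      omega
    rw [h1, fin_sum_ite_nat]
    have h2 : (1 ≤ m+1 ∧ m+1 ≤ N) ↔ m < N := by omega
    simp only [h2, Nat.add_sub_cancel]

lemma heisHam_apply_split (N : ℕ) (J : ℕ → ℝ) (i j : Fin N) :
    heisHam N J i j =
      (if (i:ℕ)+1 = (j:ℕ) then J ((i:ℕ)+1) else 0)
      + (if (j:ℕ)+1 = (i:ℕ) then J ((j:ℕ)+1) else 0)
      + (if (i:ℕ) = (j:ℕ) then -(J (i:ℕ) + J ((i:ℕ)+1)) else 0) := by
  simp only [heisHam, Matrix.of_apply, Fin.ext_iff]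
  split_ifs <;> first | omega | simp

/-- The triangularizing (generalized Vandermonde) matrix of falling factorials. -/
def hahnV (N : ℕ) : Matrix (Fin N) (Fin N) ℝ :=
  Matrix.of fun i k => ffct (k:ℕ) ((i:ℕ):ℝ)

/-- The upper-bidiagonal matrix representing the chain Hamiltonian in the
falling-factorial basis. -/
def hahnT (N : ℕ) : Matrix (Fin N) (Fin N) ℝ :=
  Matrix.of fun j k =>
    (if j = k then -(((k:ℕ):ℝ) * (((k:ℕ):ℝ)+1)) else 0)
    + (if (j:ℕ)+1 = (k:ℕ) then ((k:ℕ):ℝ)^2 * ((N:ℝ) - ((k:ℕ):ℝ)) else 0)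

@[simp] lemma hahnV_apply (N : ℕ) (i k : Fin N) :
    hahnV N i k = ffct (k:ℕ) ((i:ℕ):ℝ) := rfl

@[simp] lemma hahnT_apply (N : ℕ) (j k : Fin N) :
    hahnT N j k = (if j = k then -(((k:ℕ):ℝ) * (((k:ℕ):ℝ)+1)) else 0)
    + (if (j:ℕ)+1 = (k:ℕ) then ((k:ℕ):ℝ)^2 * ((N:ℝ) - ((k:ℕ):ℝ)) else 0) := rfl

lemma charpoly_conj {n : ℕ} (M V A : Matrix (Fin n) (Fin n) ℝ)
    (hV : IsUnit V.det) (hMV : M * V = V * A) : M.charpoly = A.charpoly := by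
  have h1 : V * V⁻¹ = 1 := Matrix.mul_nonsing_inv V hV
  have hM : M = V * A * V⁻¹ := by
    calc M = M * V * V⁻¹ := by rw [Matrix.mul_assoc, h1, Matrix.mul_one]
    _ = V * A * V⁻¹ := by rw [hMV]
  set f := ((Polynomial.C : ℝ →+* ℝ[X]).mapMatrix : Matrix (Fin n) (Fin n) ℝ →+* Matrix (Fin n) (Fin n) ℝ[X]) with hf
  have hsc : ∀ B : Matrix (Fin n) (Fin n) ℝ[X],
      B * Matrix.scalar (Fin n) (X : ℝ[X]) = Matrix.scalar (Fin n) (X : ℝ[X]) * B :=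
    fun B => ((Matrix.scalar_commute (X : ℝ[X]) (fun r' => mul_comm _ _) B)).symm
  have hfmul : ∀ P Q : Matrix (Fin n) (Fin n) ℝ, f (P * Q) = f P * f Q :=
    fun P Q => map_mul f P Q
  have hcm : Matrix.charmatrix M = f V * Matrix.charmatrix A * f V⁻¹ := by
    rw [hM]
    show Matrix.scalar (Fin n) (X:ℝ[X]) - f (V * A * V⁻¹)
        = f V * (Matrix.scalar (Fin n) (X:ℝ[X]) - f A) * f V⁻¹
    rw [hfmul, hfmul, Matrix.mul_sub, Matrix.sub_mul]
    congr 1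
    rw [hsc (f V), Matrix.mul_assoc, ← hfmul, h1, map_one, Matrix.mul_one]
  have hdet : (f V).det * (f V⁻¹).det = 1 := by
    rw [← Matrix.det_mul, ← hfmul, h1, map_one, Matrix.det_one]
  rw [Matrix.charpoly, Matrix.charpoly, hcm, Matrix.det_mul, Matrix.det_mul]
  linear_combination (Matrix.charmatrix A).det * hdet

end HahnAux

/-- The field-free Heisenberg chain with Hahn-polynomial couplings `J_n = n (N - n)` has
eigenvalues `-n(n-1)` for `n = 1, …, N`. -/
theorem hahn_chain_spectrum (N : ℕ) (hN : 1 ≤ N) :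
    (heisHam N (fun n => (n : ℝ) * ((N : ℝ) - (n : ℝ)))).charpoly
      = ∏ k ∈ Finset.range N, (X + C (((k : ℝ) + 1) * (k : ℝ))) := by
  classical
  set J : ℕ → ℝ := fun n => (n : ℝ) * ((N : ℝ) - (n : ℝ)) with hJ
  have hVlt : (hahnV N).BlockTriangular OrderDual.toDual := by
    intro i j hij
    have hij' : (i:ℕ) < (j:ℕ) := hij
    exact ffct_nat_lt hij'
  have hVdet : IsUnit (hahnV N).det := by
    rw [Matrix.det_of_lowerTriangular (hahnV N) hVlt]
    refine isUnit_iff_ne_zero.mpr (Finset.prod_ne_zero_iff.mpr fun i _ => ?_)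
    rw [hahnV_apply, ffct_self]
    exact_mod_cast (Nat.factorial_ne_zero _)
  have hmul : heisHam N J * hahnV N = hahnV N * hahnT N := by
    ext i k
    rw [Matrix.mul_apply, Matrix.mul_apply]
    have hLHS : ∑ j, heisHam N J i j * hahnV N j k
        = ((i:ℕ):ℝ) * ((N:ℝ) - ((i:ℕ):ℝ)) * ffct (k:ℕ) (((i:ℕ):ℝ) - 1)
          + (((i:ℕ):ℝ)+1) * ((N:ℝ) - (((i:ℕ):ℝ)+1)) * ffct (k:ℕ) (((i:ℕ):ℝ)+1)
          - (((i:ℕ):ℝ) * ((N:ℝ) - ((i:ℕ):ℝ))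
              + (((i:ℕ):ℝ)+1) * ((N:ℝ) - (((i:ℕ):ℝ)+1))) * ffct (k:ℕ) ((i:ℕ):ℝ) := by
      have hsplit : ∀ j : Fin N, heisHam N J i j * hahnV N j k
          = (if (i:ℕ)+1 = (j:ℕ) then J ((i:ℕ)+1) * ffct (k:ℕ) ((j:ℕ):ℝ) else 0)
          + ((if (j:ℕ)+1 = (i:ℕ) then J ((j:ℕ)+1) * ffct (k:ℕ) ((j:ℕ):ℝ) else 0)
          + (if (i:ℕ) = (j:ℕ) then -(J (i:ℕ) + J ((i:ℕ)+1)) * ffct (k:ℕ) ((j:ℕ):ℝ) else 0)) := by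
        intro j
        rw [heisHam_apply_split, hahnV_apply]
        split_ifs <;> ring
      rw [Finset.sum_congr rfl fun j _ => hsplit j]
      rw [Finset.sum_add_distrib]
      rw [Finset.sum_add_distrib]
      have e1 : (∑ j : Fin N, if (i:ℕ)+1 = (j:ℕ) then J ((i:ℕ)+1) * ffct (k:ℕ) ((j:ℕ):ℝ) else 0)
          = if (i:ℕ)+1 < N then J ((i:ℕ)+1) * ffct (k:ℕ) ((((i:ℕ)+1 : ℕ)):ℝ) else 0 :=
        fin_sum_ite_nat N ((i:ℕ)+1) (fun n => J ((i:ℕ)+1) * ffct (k:ℕ) (n:ℝ))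
      have e2 : (∑ j : Fin N, if (j:ℕ)+1 = (i:ℕ) then J ((j:ℕ)+1) * ffct (k:ℕ) ((j:ℕ):ℝ) else 0)
          = if 1 ≤ (i:ℕ) ∧ (i:ℕ) ≤ N then J (((i:ℕ)-1)+1) * ffct (k:ℕ) ((((i:ℕ)-1 : ℕ)):ℝ) else 0 :=
        fin_sum_ite_pred N (i:ℕ) (fun n => J (n+1) * ffct (k:ℕ) (n:ℝ))
      have e3 : (∑ j : Fin N, if (i:ℕ) = (j:ℕ) then -(J (i:ℕ) + J ((i:ℕ)+1)) * ffct (k:ℕ) ((j:ℕ):ℝ) else 0)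
          = if (i:ℕ) < N then -(J (i:ℕ) + J ((i:ℕ)+1)) * ffct (k:ℕ) (((i:ℕ):ℕ):ℝ) else 0 :=
        fin_sum_ite_nat N (i:ℕ) (fun n => -(J (i:ℕ) + J ((i:ℕ)+1)) * ffct (k:ℕ) (n:ℝ))
      rw [e1, e2, e3]
      simp only [hJ]
      have hiN : (i:ℕ) < N := i.isLt
      rw [if_pos hiN]
      rcases Nat.lt_or_ge ((i:ℕ)+1) N with h1 | h1
      · rw [if_pos h1]
        rcases Nat.eq_zero_or_pos (i:ℕ) with h0 | h0
        · rw [if_neg (by omega : ¬(1 ≤ (i:ℕ) ∧ (i:ℕ) ≤ N))]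
          simp only [h0]
          push_cast
          ring
        · rw [if_pos (⟨h0, Nat.le_of_lt hiN⟩ : 1 ≤ (i:ℕ) ∧ (i:ℕ) ≤ N),
            Nat.sub_add_cancel h0, Nat.cast_sub h0]
          push_cast
          ring
      · have hn : N = (i:ℕ)+1 := by omega
        rw [if_neg (by omega : ¬((i:ℕ)+1 < N))]
        have hnr : (N:ℝ) = ((i:ℕ):ℝ) + 1 := by
          exact_mod_cast congrArg (Nat.cast : ℕ → ℝ) hn
        rcases Nat.eq_zero_or_pos (i:ℕ) with h0 | h0
        · rw [if_neg (by omega : ¬(1 ≤ (i:ℕ) ∧ (i:ℕ) ≤ N)), hnr]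
          simp only [h0]
          push_cast
          ring
        · rw [if_pos (⟨h0, Nat.le_of_lt hiN⟩ : 1 ≤ (i:ℕ) ∧ (i:ℕ) ≤ N),
            Nat.sub_add_cancel h0, Nat.cast_sub h0, hnr]
          push_cast
          ring
    have hRHS : ∑ j, hahnV N i j * hahnT N j k
        = -(((k:ℕ):ℝ) * (((k:ℕ):ℝ)+1)) * ffct (k:ℕ) ((i:ℕ):ℝ)
          + ((k:ℕ):ℝ)^2 * ((N:ℝ) - ((k:ℕ):ℝ)) * ffct ((k:ℕ)-1) ((i:ℕ):ℝ) := by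
      have hsplit : ∀ j : Fin N, hahnV N i j * hahnT N j k
          = (if j = k then ffct (j:ℕ) ((i:ℕ):ℝ) * (-(((k:ℕ):ℝ) * (((k:ℕ):ℝ)+1))) else 0)
            + (if (j:ℕ)+1 = (k:ℕ) then ((k:ℕ):ℝ)^2 * ((N:ℝ) - ((k:ℕ):ℝ)) * ffct (j:ℕ) ((i:ℕ):ℝ) else 0) := by
        intro j; rw [hahnV_apply, hahnT_apply]; split_ifs <;> ring
      rw [Finset.sum_congr rfl fun j _ => hsplit j, Finset.sum_add_distrib]
      have e1 : (∑ j : Fin N, if j = k then ffct (j:ℕ) ((i:ℕ):ℝ) * (-(((k:ℕ):ℝ) * (((k:ℕ):ℝ)+1))) else 0)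
          = ffct (k:ℕ) ((i:ℕ):ℝ) * (-(((k:ℕ):ℝ) * (((k:ℕ):ℝ)+1))) := by
        refine Eq.trans (Finset.sum_ite_eq' Finset.univ k
          (fun j => ffct (j:ℕ) ((i:ℕ):ℝ) * (-(((k:ℕ):ℝ) * (((k:ℕ):ℝ)+1))))) ?_
        simp
      have e2 : (∑ j : Fin N, if (j:ℕ)+1 = (k:ℕ) then ((k:ℕ):ℝ)^2 * ((N:ℝ) - ((k:ℕ):ℝ)) * ffct (j:ℕ) ((i:ℕ):ℝ) else 0)
          = ((k:ℕ):ℝ)^2 * ((N:ℝ) - ((k:ℕ):ℝ)) * ffct ((k:ℕ)-1) ((i:ℕ):ℝ) := by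
        refine Eq.trans (fin_sum_ite_pred N (k:ℕ)
          (fun n => ((k:ℕ):ℝ)^2 * ((N:ℝ) - ((k:ℕ):ℝ)) * ffct n ((i:ℕ):ℝ))) ?_
        by_cases hk : 1 ≤ (k:ℕ)
        · rw [if_pos ⟨hk, Nat.le_of_lt k.isLt⟩]
        · have hk0 : (k:ℕ) = 0 := by omega
          rw [if_neg (by omega : ¬(1 ≤ (k:ℕ) ∧ (k:ℕ) ≤ N))]
          simp [hk0]
      rw [e1, e2]; ring
    calc ∑ j, heisHam N J i j * hahnV N j k
        = _ := hLHS
      _ = -(((k:ℕ):ℝ) * (((k:ℕ):ℝ)+1)) * ffct (k:ℕ) ((i:ℕ):ℝ)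
          + ((k:ℕ):ℝ)^2 * ((N:ℝ) - ((k:ℕ):ℝ)) * ffct ((k:ℕ)-1) ((i:ℕ):ℝ) :=
        ffct_key N (k:ℕ) ((i:ℕ):ℝ)
      _ = ∑ j, hahnV N i j * hahnT N j k := hRHS.symm
  have hT : (hahnT N).BlockTriangular id := by
    intro a b hab
    have h1 : (b:ℕ) < (a:ℕ) := hab
    rw [hahnT_apply, if_neg (by intro h; subst h; omega), if_neg (by omega)]
    simp
  rw [charpoly_conj (heisHam N J) (hahnV N) (hahnT N) hVdet hmul,
    Matrix.charpoly_of_upperTriangular (hahnT N) hT]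
  have hdiag : ∀ i : Fin N, X - C (hahnT N i i) = X + C ((((i:ℕ):ℝ)+1) * ((i:ℕ):ℝ)) := by
    intro i
    rw [hahnT_apply, if_pos rfl, if_neg (by omega)]
    rw [show (-(((i:ℕ):ℝ) * (((i:ℕ):ℝ)+1)) + 0) = -((((i:ℕ):ℝ)+1) * ((i:ℕ):ℝ)) by ring]
    rw [map_neg, sub_neg_eq_add]
  rw [Finset.prod_congr rfl (fun i _ => hdiag i)]
  exact Fin.prod_univ_eq_prod_range (fun n => X + C (((n:ℝ)+1) * (n:ℝ))) N
end

section
/- Let N ≥ 1 and take couplings J_n = n·(N−n) for 1 ≤ n ≤ N−1, with h the single-excitation Hamiltonian of the corresponding field-free Heisenberg chain of length N. Then exp(−i·π·h) equals the identity matrix; i.e., the chain exhibits a perfect revival at time t_0 = π with phase 0. -/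
open Polynomial Matrix

namespace Matrix

variable {n : Type*} [Fintype n] [DecidableEq n]

theorem charpoly_eq_prod_of_mul_eq_mul {R : Type*} [CommRing R] [LinearOrder n]
    {A V T : Matrix n n R} (hV : IsUnit V) (h : A * V = V * T) (hT : T.IsUpperTriangular) :
    A.charpoly = ∏ i, (X - C (T i i)) := by
  obtain ⟨U, rfl⟩ := hV
  rw [(Units.eq_mul_inv_iff_mul_eq U).mpr h, coe_units_inv, charpoly_units_conj,
    charpoly_of_isUpperTriangular T hT]

theorem IsHermitian.exp_smul_eq_one {A : Matrix n n ℂ} (hA : A.IsHermitian) {c : ℂ}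
    (h : ∀ μ, A.charpoly.IsRoot μ → Complex.exp (c * μ) = 1) : NormedSpace.exp (c • A) = 1 := by
  set U : Matrix n n ℂ := (hA.eigenvectorUnitary : Matrix n n ℂ)
  have hU : IsUnit U := ⟨Unitary.toUnits hA.eigenvectorUnitary, rfl⟩
  have hcA : c • A = U * diagonal (fun i => c * hA.eigenvalues i) * U⁻¹ := by
    have hD : diagonal (fun i => c * (hA.eigenvalues i : ℂ)) =
        c • diagonal (RCLike.ofReal ∘ hA.eigenvalues) := by
      rw [← diagonal_smul]; rfl
    conv_lhs => rw [hA.spectral_theorem]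
    rw [inv_eq_left_inv (Unitary.coe_star_mul_self _), Unitary.conjStarAlgAut_apply, hD,
      Matrix.mul_smul, Matrix.smul_mul]
  have hexp : (fun i => NormedSpace.exp (c * hA.eigenvalues i)) = 1 := by
    ext i
    have hroot : A.charpoly.IsRoot (hA.eigenvalues i) := by
      simpa [hA.charpoly_eq, eval_prod, Finset.prod_eq_zero_iff] using ⟨i, sub_self _⟩
    rw [← Complex.exp_eq_exp_ℂ, h _ hroot]
    rfl
  rw [hcA, exp_conj _ _ hU, exp_diagonal, Pi.exp_def, hexp, diagonal_one', mul_one,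
    mul_nonsing_inv _ ((isUnit_iff_isUnit_det U).mp hU)]

end Matrix

theorem descPochhammer_succ_eval_hahn {R : Type*} [CommRing R] (N x : R) (k : ℕ) :
    (x + 1) * (N - (x + 1)) *
        ((descPochhammer R (k + 1)).eval (x + 1) - (descPochhammer R (k + 1)).eval x) +
      x * (N - x) *
        ((descPochhammer R (k + 1)).eval (x - 1) - (descPochhammer R (k + 1)).eval x) =
      -((k + 1) * (k + 2)) * (descPochhammer R (k + 1)).eval x +
        (k + 1) ^ 2 * (N - (k + 1)) * (descPochhammer R k).eval x := by
  have hsub (y : R) : (descPochhammer R (k + 1)).eval (y - 1) =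
      (descPochhammer R (k + 1)).eval y - (k + 1) * (descPochhammer R k).eval (y - 1) := by
    simpa using congrArg (eval y) (descPochhammer_succ_comp_X_sub_one R k)
  have hfwd := hsub (x + 1)
  rw [add_sub_cancel_right] at hfwd
  have hleft : (descPochhammer R (k + 1)).eval x = x * (descPochhammer R k).eval (x - 1) := by
    simp [descPochhammer_succ_left]
  have hright := descPochhammer_succ_eval k x
  linear_combination (-(x + 1) * (N - x - 1)) * hfwd + x * (N - x) * hsub x +
    (N - x) * (k + 1) * hleft - (k + 1) * (N - x - k - 2) * hright

theorem heisHam_isSymm (N : ℕ) (J : ℕ → ℝ) : (heisHam N J).IsSymm := by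
  ext i j
  simp only [transpose_apply, heisHam, of_apply]
  split_ifs <;> grind

theorem Fin.sum_ite_val_eq {M : Type*} [AddCommMonoid M] (N k : ℕ) (a : M) :
    ∑ y : Fin N, (if (y : ℕ) = k then a else 0) = if k < N then a else 0 := by
  simp [Fin.sum_univ_eq_sum_range (fun y => if y = k then a else 0)]

theorem heisHam_mulVec_apply {N : ℕ} {J : ℕ → ℝ} (hJ0 : J 0 = 0) (hJN : J N = 0) (f : ℝ → ℝ)
    (x : Fin N) :
    (heisHam N J *ᵥ fun y => f y) x =
      J (x + 1) * (f (x + 1) - f x) + J x * (f (x - 1) - f x) := by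
  obtain ⟨x, hx⟩ := x
  have hentry (y : Fin N) : heisHam N J ⟨x, hx⟩ y * f y =
      (if (y : ℕ) = x + 1 then J (x + 1) * f (x + 1) else 0) +
      (if (y : ℕ) + 1 = x then J x * f (x - 1) else 0) +
      (if (y : ℕ) = x then -(J x + J (x + 1)) * f x else 0) := by
    obtain ⟨y, hy⟩ := y
    simp only [heisHam, of_apply, Fin.ext_iff]
    split_ifs <;> first | omega | (subst_vars; push_cast; ring_nf)
  simp only [mulVec, dotProduct, hentry, Finset.sum_add_distrib, Fin.sum_ite_val_eq]
  have hprev : ∑ y : Fin N, (if (y : ℕ) + 1 = x then J x * f (x - 1) else 0) =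
      J x * f (x - 1) := by
    rcases x with _ | x
    · simp [hJ0]
    · simp only [Nat.add_right_cancel_iff, Fin.sum_ite_val_eq, if_pos (by omega : x < N)]
  rw [hprev, if_pos hx]
  rcases (by omega : x + 1 < N ∨ x + 1 = N) with hlt | heq
  · rw [if_pos hlt]; ring
  · rw [if_neg heq.not_lt, heq, hJN]; ring

noncomputable def descPochhammerMatrix (N : ℕ) : Matrix (Fin N) (Fin N) ℝ :=
  of fun x k => (descPochhammer ℝ k).eval ((x : ℕ) : ℝ)

def hahnBidiagonal (N : ℕ) : Matrix (Fin N) (Fin N) ℝ :=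
  of fun i k => if (i : ℕ) = k then -((k : ℝ) * (k + 1))
    else if (i : ℕ) + 1 = k then (k : ℝ) ^ 2 * (N - k) else 0

theorem heisHam_mul_descPochhammerMatrix (N : ℕ) :
    heisHam N (fun n => (n : ℝ) * (N - n)) * descPochhammerMatrix N =
      descPochhammerMatrix N * hahnBidiagonal N := by
  ext x ⟨k, hk⟩
  have hentry (i : Fin N) : descPochhammerMatrix N x i * hahnBidiagonal N i ⟨k, hk⟩ =
      (if (i : ℕ) = k then (descPochhammer ℝ k).eval ((x : ℕ) : ℝ) * -((k : ℝ) * (k + 1))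
        else 0) +
      (if (i : ℕ) + 1 = k then
        (descPochhammer ℝ (k - 1)).eval ((x : ℕ) : ℝ) * ((k : ℝ) ^ 2 * (N - k)) else 0) := by
    obtain ⟨i, hi⟩ := i
    simp only [descPochhammerMatrix, hahnBidiagonal, of_apply]
    split_ifs <;> first | omega | (subst_vars; simp)
  rw [mul_apply (M := descPochhammerMatrix N), Finset.sum_congr rfl fun i _ => hentry i]
  change (heisHam N _ *ᵥ fun y => (descPochhammer ℝ k).eval ((y : ℕ) : ℝ)) x = _
  rw [heisHam_mulVec_apply (f := fun t => (descPochhammer ℝ k).eval t) (by simp) (by simp),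
    Finset.sum_add_distrib, Fin.sum_ite_val_eq, if_pos hk]
  rcases k with _ | k
  · simp
  · simp only [Nat.add_right_cancel_iff, Fin.sum_ite_val_eq, if_pos (by omega : k < N)]
    push_cast
    linear_combination descPochhammer_succ_eval_hahn (N : ℝ) (x : ℝ) k

theorem isUnit_descPochhammerMatrix (N : ℕ) : IsUnit (descPochhammerMatrix N) := by
  have hlower : (descPochhammerMatrix N).IsLowerTriangular := fun x k hxk =>
    descPochhammer_eval_coe_nat_of_lt (R := ℝ) (Fin.lt_def.mp hxk)
  rw [isUnit_iff_isUnit_det, det_of_isLowerTriangular _ hlower, isUnit_iff_ne_zero,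
    Finset.prod_ne_zero_iff]
  intro k _
  simp [descPochhammerMatrix, descPochhammer_eval_eq_descFactorial]

theorem hahnBidiagonal_isUpperTriangular (N : ℕ) : (hahnBidiagonal N).IsUpperTriangular :=
  fun i k hki => by
    have : (k : ℕ) < i := hki
    simp only [hahnBidiagonal, of_apply]
    rw [if_neg (by omega), if_neg (by omega)]

theorem charpoly_heisHam_hahn (N : ℕ) :
    (heisHam N (fun n => (n : ℝ) * (N - n))).charpoly =
      ∏ k : Fin N, (X + C ((k : ℝ) * (k + 1))) := by
  rw [charpoly_eq_prod_of_mul_eq_mul (isUnit_descPochhammerMatrix N)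
    (heisHam_mul_descPochhammerMatrix N) (hahnBidiagonal_isUpperTriangular N)]
  simp [hahnBidiagonal]

theorem hahn_chain_perfect_revival_general (N : ℕ) :
    NormedSpace.exp
        ((-(Complex.I * (Real.pi : ℂ))) •
          (heisHam N (fun n => (n : ℝ) * ((N : ℝ) - (n : ℝ)))).map Complex.ofReal)
      = (1 : Matrix (Fin N) (Fin N) ℂ) := by
  set H := heisHam N (fun n => (n : ℝ) * ((N : ℝ) - (n : ℝ)))
  have hH : (H.map Complex.ofReal).IsHermitian :=
    (isHermitian_iff_isSymm.mpr (heisHam_isSymm N _)).map _ fun x => (Complex.conj_ofReal x).symm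
  refine hH.exp_smul_eq_one fun μ hμ => ?_
  change (H.map Complex.ofRealHom).charpoly.IsRoot μ at hμ
  rw [charpoly_map, charpoly_heisHam_hahn, Polynomial.map_prod] at hμ
  obtain ⟨k, -, hk⟩ := Finset.prod_eq_zero_iff.mp (by simpa [IsRoot, eval_prod] using hμ)
  rw [eq_neg_of_add_eq_zero_left hk, neg_mul_neg,
    show Complex.I * Real.pi * ((k : ℂ) * (k + 1)) =
        ((k * (k + 1) : ℕ) : ℂ) * (Real.pi * Complex.I) by push_cast; ring,
    Complex.exp_nat_mul, Complex.exp_pi_mul_I, (Nat.even_mul_succ_self k).neg_one_pow]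

/-- The field-free Heisenberg chain with couplings `J_n = n (N - n)` exhibits a perfect
revival at time `π` with phase `0`: `exp(-iπh) = 1`. -/
theorem hahn_chain_perfect_revival (N : ℕ) (hN : 1 ≤ N) :
    NormedSpace.exp
        ((-(Complex.I * (Real.pi : ℂ))) •
          (heisHam N (fun n => (n : ℝ) * ((N : ℝ) - (n : ℝ)))).map Complex.ofReal)
      = (1 : Matrix (Fin N) (Fin N) ℂ) :=
  hahn_chain_perfect_revival_general N
end

section
/- For all natural numbers N and n with 1 ≤ n ≤ N−1, the following identity of natural numbers holds: (2n−1)·((N−1)!)²·C(2N−2, N−1) = (N+n−1)!·(N−n)!·(C(2N−2, N−n) − C(2N−2, N−n−1)), where C(·,·) denotes the binomial coefficient and the subtraction is well defined since C(2N−2, N−n) ≥ C(2N−2, N−n−1) for n ≥ 1. -/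
/-- The binomial identity rewriting the squared endpoint amplitudes of the Hahn chain:
`(2n-1)((N-1)!)² C(2N-2, N-1) = (N+n-1)!(N-n)!(C(2N-2, N-n) - C(2N-2, N-n-1))`. -/
theorem hahn_amplitude_binomial_identity (N n : ℕ) (h1 : 1 ≤ n) (h2 : n ≤ N - 1) :
    (2 * n - 1) * Nat.factorial (N - 1) ^ 2 * Nat.choose (2 * N - 2) (N - 1)
      = Nat.factorial (N + n - 1) * Nat.factorial (N - n) *
          (Nat.choose (2 * N - 2) (N - n) - Nat.choose (2 * N - 2) (N - n - 1)) := by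
  obtain ⟨k, rfl⟩ : ∃ k, n = k + 1 := ⟨n - 1, by omega⟩
  obtain ⟨j, rfl⟩ : ∃ j, N = k + 1 + j + 1 := ⟨N - k - 2, by omega⟩
  rw [show 2 * (k + 1) - 1 = 2 * k + 1 from by omega,
      show k + 1 + j + 1 - 1 = k + j + 1 from by omega,
      show 2 * (k + 1 + j + 1) - 2 = 2 * k + 2 * j + 2 from by omega,
      show k + 1 + j + 1 + (k + 1) - 1 = 2 * k + j + 2 from by omega,
      show k + 1 + j + 1 - (k + 1) = j + 1 from by omega,
      show j + 1 - 1 = j from by omega]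
  have h0 := Nat.choose_mul_factorial_mul_factorial
    (show k + j + 1 ≤ 2 * k + 2 * j + 2 from by omega)
  rw [show 2 * k + 2 * j + 2 - (k + j + 1) = k + j + 1 from by omega] at h0
  have h1' := Nat.choose_mul_factorial_mul_factorial
    (show j + 1 ≤ 2 * k + 2 * j + 2 from by omega)
  rw [show 2 * k + 2 * j + 2 - (j + 1) = 2 * k + j + 1 from by omega] at h1'
  have h2' := Nat.choose_mul_factorial_mul_factorial
    (show j ≤ 2 * k + 2 * j + 2 from by omega)
  rw [show 2 * k + 2 * j + 2 - j = 2 * k + j + 2 from by omega] at h2'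
  have A : (2 * k + j + 2).factorial * (j + 1).factorial *
      Nat.choose (2 * k + 2 * j + 2) (j + 1)
      = (2 * k + j + 2) * (2 * k + 2 * j + 2).factorial := by
    rw [show 2 * k + j + 2 = (2 * k + j + 1) + 1 from by omega, Nat.factorial_succ, ← h1']
    ring
  have B : (2 * k + j + 2).factorial * (j + 1).factorial *
      Nat.choose (2 * k + 2 * j + 2) j
      = (j + 1) * (2 * k + 2 * j + 2).factorial := by
    rw [Nat.factorial_succ j, ← h2']
    ring
  rw [Nat.mul_sub, A, B, ← Nat.sub_mul,
      show 2 * k + j + 2 - (j + 1) = 2 * k + 1 from by omega, pow_two, ← h0]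
  ring
end

section
/- Let r ≥ 1 and N = 2^r. Then for every n with 1 ≤ n ≤ N−1, the natural number C(2N−2, N−n) − C(2N−2, N−n−1) is odd, where C(·,·) denotes the binomial coefficient. -/
private lemma lucas2 (m k : ℕ) :
    Nat.choose m k % 2 = (Nat.choose (m % 2) (k % 2) * Nat.choose (m / 2) (k / 2)) % 2 := by
  haveI : Fact (Nat.Prime 2) := ⟨Nat.prime_two⟩
  exact Choose.choose_modEq_choose_mod_mul_choose_div_nat

/-- `C(2^r - 1, j)` is odd for all `j ≤ 2^r - 1`. -/
private lemma choose_pow_two_sub_one_odd :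
    ∀ r j : ℕ, j ≤ 2 ^ r - 1 → Nat.choose (2 ^ r - 1) j % 2 = 1 := by
  intro r
  induction r with
  | zero => intro j hj; interval_cases j <;> simp
  | succ r ih =>
    intro j hj
    have hm : (2 : ℕ) ^ (r + 1) - 1 = 2 * (2 ^ r - 1) + 1 := by
      have : (1:ℕ) ≤ 2 ^ r := Nat.one_le_two_pow
      omega
    rw [lucas2]
    have h1 : (2 ^ (r + 1) - 1) % 2 = 1 := by omega
    have h2 : (2 ^ (r + 1) - 1) / 2 = 2 ^ r - 1 := by omega
    rw [h1, h2]
    have hj2 : j / 2 ≤ 2 ^ r - 1 := by omega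
    have hk : Nat.choose 1 (j % 2) = 1 := by
      have : j % 2 = 0 ∨ j % 2 = 1 := by omega
      rcases this with h | h <;> simp [h]
    rw [hk, one_mul, ih _ hj2]

/-- Parity of `C(2N-2, k)` for `N = 2^r`: odd iff `k` even (and `k ≤ 2N-2`). -/
private lemma choose_even_top (r k : ℕ) (hr : 1 ≤ r) (hk : k ≤ 2 * 2 ^ r - 2) :
    Nat.choose (2 * 2 ^ r - 2) k % 2 = if k % 2 = 0 then 1 else 0 := by
  have hN : (2:ℕ) ≤ 2 ^ r := by
    calc (2:ℕ) = 2 ^ 1 := by norm_num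
    _ ≤ 2 ^ r := Nat.pow_le_pow_right (by norm_num) hr
  rw [lucas2]
  have h1 : (2 * 2 ^ r - 2) % 2 = 0 := by omega
  have h2 : (2 * 2 ^ r - 2) / 2 = 2 ^ r - 1 := by omega
  rw [h1, h2]
  rcases Nat.even_or_odd k with he | ho
  · have hk0 : k % 2 = 0 := Nat.even_iff.mp he
    rw [hk0]
    have : k / 2 ≤ 2 ^ r - 1 := by omega
    simp [Nat.choose_zero_right, choose_pow_two_sub_one_odd r _ this]
  · have hk1 : k % 2 = 1 := Nat.odd_iff.mp ho
    rw [hk1]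
    simp

/-- For `N = 2^r` a power of two, all the integers `C(2N-2, N-n) - C(2N-2, N-n-1)` for
`1 ≤ n ≤ N-1` are odd (a consequence of Kummer's theorem). -/
theorem hahn_weights_odd_of_pow_two (r : ℕ) (hr : 1 ≤ r) (n : ℕ)
    (h1 : 1 ≤ n) (h2 : n ≤ 2 ^ r - 1) :
    Odd (Nat.choose (2 * 2 ^ r - 2) (2 ^ r - n) - Nat.choose (2 * 2 ^ r - 2) (2 ^ r - n - 1)) := by
  have hN : (2:ℕ) ≤ 2 ^ r := by
    calc (2:ℕ) = 2 ^ 1 := by norm_num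
    _ ≤ 2 ^ r := Nat.pow_le_pow_right (by norm_num) hr
  have hNdef : True := trivial
  set a := 2 ^ r - n with ha
  have ha1 : 1 ≤ a := by omega
  have haN : a ≤ 2 ^ r - 1 := by omega
  -- monotonicity: C(2N-2, a-1) ≤ C(2N-2, a)
  have hmono : Nat.choose (2 * 2 ^ r - 2) (a - 1) ≤ Nat.choose (2 * 2 ^ r - 2) a := by
    have hhalf : a - 1 < (2 * 2 ^ r - 2) / 2 := by omega
    have := Nat.choose_le_succ_of_lt_half_left hhalf
    have hsucc : a - 1 + 1 = a := by omega
    rwa [hsucc] at this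
  -- parities differ
  have hpa := choose_even_top r a hr (by omega)
  have hpb := choose_even_top r (a - 1) hr (by omega)
  have hdiff : (a - 1) % 2 ≠ a % 2 := by omega
  rw [Nat.odd_iff]
  rcases Nat.even_or_odd a with he | ho
  · have h0 : a % 2 = 0 := Nat.even_iff.mp he
    have h1' : (a - 1) % 2 = 1 := by omega
    rw [h0] at hpa; rw [h1'] at hpb
    simp at hpa hpb
    omega
  · have h1'' : a % 2 = 1 := Nat.odd_iff.mp ho
    have h0' : (a - 1) % 2 = 0 := by omega
    rw [h1''] at hpa; rw [h0'] at hpb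
    simp at hpa hpb
    omega
end
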